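/- arXiv:1206.1397 — 6 statements merged into one kernel-verified Lean document; each statement's English description precedes it below -/
import Mathlib

section
/- Let λ_0, λ_1 > 0 and α ∈ (0,1). Then there exists exactly one pair (p,q) ∈ (0,1)² satisfying both 2pq = α(2+p-q) and α(λ_1-λ_0)·log(p(1-q)/((1-p)q)) + λ_0·log(p²(1-q)/(1-p)) - 2λ_1·log(1-p) = 0. -/
/-!
Solving the first equation for `q` gives `q = α(2+p)/(2p+α)`, which lies in `(0,1)` exactly for
`p ∈ (α/(2-α), 1)`, and decreases there from `1` to `3α/(2+α) > α`. Expanding the logarithms, the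
second equation becomes `A log p - C log(1-p) + g(q) = 0` with `A, C > 0` and
`g(q) = B log(1-q) - α(λ₁-λ₀) log q`, where `B > 0` and
`g'(q) = -(λ₀(q-α) + αλ₁)/(q(1-q)) < 0` for `q > α`. So along the curve of the first equation the
left side is strictly increasing in `p`; it tends to `-∞` as `p ↓ α/(2-α)` (since `q ↑ 1`) and to
`+∞` as `p ↑ 1`, hence vanishes exactly once.
-/

open Filter Set Real Topology

noncomputable def qOf (α p : ℝ) : ℝ := α * (2 + p) / (2 * p + α)

section qOf

variable {α p q : ℝ}

lemma two_mul_mul_eq_iff_eq_qOf (hd : 0 < 2 * p + α) :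
    2 * p * q = α * (2 + p - q) ↔ q = qOf α p := by
  rw [qOf, eq_div_iff hd.ne']
  constructor <;> intro h <;> linarith

lemma qOf_lt_one_iff (hα : α < 2) (hd : 0 < 2 * p + α) : qOf α p < 1 ↔ α / (2 - α) < p := by
  rw [qOf, div_lt_one hd, div_lt_iff₀ (by linarith)]
  constructor <;> intro h <;> linarith

lemma lt_qOf (hα : 0 < α) (hd : 0 < 2 * p + α) (hpα : p + α < 2) : α < qOf α p := by
  rw [qOf, lt_div_iff₀ hd]
  nlinarith

lemma strictAntiOn_qOf (hα0 : 0 < α) (hα4 : α < 4) : StrictAntiOn (qOf α) (Ioi 0) := by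
  intro p (hp : 0 < p) p' (hp' : 0 < p') hpp'
  rw [qOf, qOf, div_lt_div_iff₀ (by linarith) (by linarith)]
  nlinarith [mul_pos (mul_pos hα0 (sub_pos.2 hα4)) (sub_pos.2 hpp')]

lemma continuousAt_qOf (hd : 2 * p + α ≠ 0) : ContinuousAt (qOf α) p := by
  unfold qOf; fun_prop (disch := exact hd)

lemma qOf_div_two_sub (hα0 : 0 < α) (hα2 : α < 2) : qOf α (α / (2 - α)) = 1 := by
  have : 2 - α ≠ 0 := by linarith
  rw [qOf, div_eq_one_iff_eq (by positivity)]
  field_simp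
  ring

lemma tendsto_qOf_nhdsGT_div_two_sub (hα0 : 0 < α) (hα2 : α < 2) :
    Tendsto (qOf α) (𝓝[>] (α / (2 - α))) (𝓝[<] 1) := by
  have ha : 0 < α / (2 - α) := div_pos hα0 (by linarith)
  refine tendsto_nhdsWithin_iff.2 ⟨?_, ?_⟩
  · rw [← qOf_div_two_sub hα0 hα2]
    exact (continuousAt_qOf (by positivity)).tendsto.mono_left nhdsWithin_le_nhds
  · filter_upwards [self_mem_nhdsWithin] with p (hp : α / (2 - α) < p)
    exact (qOf_lt_one_iff hα2 (by linarith)).2 hp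

lemma qOf_mem_Ioo (hα0 : 0 < α) (hα1 : α < 1) (hpa : α / (2 - α) < p) (hp1 : p ≤ 1) :
    qOf α p ∈ Ioo α 1 := by
  have hp0 : 0 < p := (div_pos hα0 (by linarith)).trans hpa
  exact ⟨lt_qOf hα0 (by linarith) (by linarith), (qOf_lt_one_iff (by linarith) (by linarith)).2 hpa⟩

end qOf

lemma tendsto_one_sub_nhdsLT_one : Tendsto (fun x : ℝ => 1 - x) (𝓝[<] 1) (𝓝[>] 0) := by
  refine tendsto_nhdsWithin_iff.2 ⟨?_, ?_⟩
  · have : Tendsto (fun x : ℝ => 1 - x) (𝓝 1) (𝓝 0) := by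
      simpa using (tendsto_const_nhds (x := (1 : ℝ))).sub (tendsto_id (x := 𝓝 (1 : ℝ)))
    exact this.mono_left nhdsWithin_le_nhds
  · filter_upwards [self_mem_nhdsWithin] with x (hx : x < 1)
    exact sub_pos.2 hx

noncomputable def qTerm (lam0 lam1 α q : ℝ) : ℝ :=
  (α * lam1 + (1 - α) * lam0) * log (1 - q) - α * (lam1 - lam0) * log q

section qTerm

variable {lam0 lam1 α q : ℝ}

lemma hasDerivAt_qTerm (hq0 : 0 < q) (hq1 : q < 1) :
    HasDerivAt (qTerm lam0 lam1 α)
      (-(lam0 * (q - α) + α * lam1) / (q * (1 - q))) q := by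
  have hlog1 : HasDerivAt (fun x => log (1 - x)) (-1 / (1 - q)) q :=
    ((hasDerivAt_id q).const_sub 1).log (by simp; linarith)
  refine ((hlog1.const_mul (α * lam1 + (1 - α) * lam0)).sub
    ((hasDerivAt_log hq0.ne').const_mul (α * (lam1 - lam0)))).congr_deriv ?_
  have : 1 - q ≠ 0 := by linarith
  field_simp
  ring

lemma strictAntiOn_qTerm (h0 : 0 < lam0) (h1 : 0 ≤ lam1) (hα : 0 ≤ α) :
    StrictAntiOn (qTerm lam0 lam1 α) (Ioo α 1) := by
  refine strictAntiOn_of_deriv_neg (convex_Ioo α 1) (fun q hq => ?_) fun q hq => ?_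
  · exact (hasDerivAt_qTerm (hα.trans_lt hq.1) hq.2).continuousAt.continuousWithinAt
  · rw [interior_Ioo] at hq
    have hq0 : 0 < q := hα.trans_lt hq.1
    rw [(hasDerivAt_qTerm hq0 hq.2).deriv, neg_div, neg_lt_zero]
    have : 0 < lam0 * (q - α) := mul_pos h0 (sub_pos.2 hq.1)
    have : 0 < 1 - q := sub_pos.2 hq.2
    positivity

lemma tendsto_qTerm_nhdsLT_one (hB : 0 < α * lam1 + (1 - α) * lam0) :
    Tendsto (qTerm lam0 lam1 α) (𝓝[<] 1) atBot := by
  have hlog : Tendsto (fun q => -(α * (lam1 - lam0) * log q)) (𝓝[<] 1) (𝓝 0) := by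
    have : ContinuousAt (fun q => -(α * (lam1 - lam0) * log q)) 1 := by
      fun_prop (disch := norm_num)
    simpa using this.tendsto.mono_left nhdsWithin_le_nhds
  exact (((tendsto_log_nhdsGT_zero.comp tendsto_one_sub_nhdsLT_one).const_mul_atBot hB).atBot_add
    hlog).congr fun q => (sub_eq_add_neg _ _).symm

end qTerm

/-- The left side of the second equation along the curve `q = qOf α p` of the first one. -/
noncomputable def reducedEq (lam0 lam1 α p : ℝ) : ℝ :=
  (α * lam1 + (2 - α) * lam0) * log p - ((2 + α) * lam1 + (1 - α) * lam0) * log (1 - p)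
    + qTerm lam0 lam1 α (qOf α p)

section reducedEq

variable {lam0 lam1 α : ℝ}

lemma secondEq_lhs_eq {p q : ℝ} (hp : p ∈ Ioo (0 : ℝ) 1) (hq : q ∈ Ioo (0 : ℝ) 1) :
    α * (lam1 - lam0) * log (p * (1 - q) / ((1 - p) * q)) +
        lam0 * log (p ^ 2 * (1 - q) / (1 - p)) - 2 * lam1 * log (1 - p) =
      (α * lam1 + (2 - α) * lam0) * log p - ((2 + α) * lam1 + (1 - α) * lam0) * log (1 - p)
        + qTerm lam0 lam1 α q := by
  have hp0 : p ≠ 0 := hp.1.ne'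
  have hq0 : q ≠ 0 := hq.1.ne'
  have hp1 : 1 - p ≠ 0 := (sub_pos.2 hp.2).ne'
  have hq1 : 1 - q ≠ 0 := (sub_pos.2 hq.2).ne'
  rw [log_div (by positivity) (by positivity), log_div (by positivity) hp1,
    log_mul hp0 hq1, log_mul hp1 hq0, log_mul (by positivity) hq1, log_pow, qTerm]
  push_cast
  ring

lemma strictMonoOn_reducedEq (h0 : 0 < lam0) (h1 : 0 < lam1) (hα0 : 0 < α) (hα1 : α < 1) :
    StrictMonoOn (reducedEq lam0 lam1 α) (Ioo (α / (2 - α)) 1) := by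
  have ha : 0 < α / (2 - α) := div_pos hα0 (by linarith)
  have hlogs : StrictMonoOn (fun p => (α * lam1 + (2 - α) * lam0) * log p
      - ((2 + α) * lam1 + (1 - α) * lam0) * log (1 - p)) (Ioo (α / (2 - α)) 1) := by
    intro x hx y hy hxy
    have hx0 : 0 < x := ha.trans hx.1
    have hlog := mul_lt_mul_of_pos_left (log_lt_log hx0 hxy)
      (by nlinarith : 0 < α * lam1 + (2 - α) * lam0)
    have hlog_one_sub := mul_lt_mul_of_pos_left
      (log_lt_log (sub_pos.2 hy.2) (sub_lt_sub_left hxy 1))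
      (by nlinarith : 0 < (2 + α) * lam1 + (1 - α) * lam0)
    linarith
  have hqTerm : StrictMonoOn (fun p => qTerm lam0 lam1 α (qOf α p)) (Ioo (α / (2 - α)) 1) :=
    (strictAntiOn_qTerm h0 h1.le hα0.le).comp
      ((strictAntiOn_qOf hα0 (by linarith)).mono fun p hp => ha.trans hp.1)
      fun p hp => qOf_mem_Ioo hα0 hα1 hp.1 hp.2.le
  exact hlogs.add hqTerm

lemma continuousAt_qTerm_qOf (hα0 : 0 < α) (hα1 : α < 1) {p : ℝ} (hpa : α / (2 - α) < p)
    (hp1 : p ≤ 1) : ContinuousAt (fun p => qTerm lam0 lam1 α (qOf α p)) p := by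
  have hp0 : 0 < p := (div_pos hα0 (by linarith)).trans hpa
  have hq := qOf_mem_Ioo hα0 hα1 hpa hp1
  exact (hasDerivAt_qTerm (hα0.trans hq.1) hq.2).continuousAt.comp (continuousAt_qOf (by linarith))

lemma continuousOn_reducedEq (hα0 : 0 < α) (hα1 : α < 1) :
    ContinuousOn (reducedEq lam0 lam1 α) (Ioo (α / (2 - α)) 1) := by
  intro p hp
  have hp0 : p ≠ 0 := ((div_pos hα0 (by linarith)).trans hp.1).ne'
  have hp1 : 1 - p ≠ 0 := (sub_pos.2 hp.2).ne'
  have := continuousAt_qTerm_qOf (lam0 := lam0) (lam1 := lam1) hα0 hα1 hp.1 hp.2.le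
  unfold reducedEq
  fun_prop (disch := assumption)

lemma tendsto_reducedEq_nhdsGT_div_two_sub (h0 : 0 < lam0) (h1 : 0 < lam1) (hα0 : 0 < α)
    (hα1 : α < 1) : Tendsto (reducedEq lam0 lam1 α) (𝓝[>] (α / (2 - α))) atBot := by
  have ha0 : 0 < α / (2 - α) := div_pos hα0 (by linarith)
  have ha1 : 1 - α / (2 - α) ≠ 0 := by
    rw [sub_ne_zero, ne_comm, ne_eq, div_eq_one_iff_eq (by linarith)]; linarith
  have hlogs : ContinuousAt (fun p => (α * lam1 + (2 - α) * lam0) * log p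
      - ((2 + α) * lam1 + (1 - α) * lam0) * log (1 - p)) (α / (2 - α)) := by
    fun_prop (disch := first | exact ha0.ne' | exact ha1)
  exact (hlogs.tendsto.mono_left nhdsWithin_le_nhds).add_atBot
    ((tendsto_qTerm_nhdsLT_one (by nlinarith)).comp
      (tendsto_qOf_nhdsGT_div_two_sub hα0 (by linarith)))

lemma tendsto_reducedEq_nhdsLT_one (h0 : 0 < lam0) (h1 : 0 < lam1) (hα0 : 0 < α)
    (hα1 : α < 1) : Tendsto (reducedEq lam0 lam1 α) (𝓝[<] 1) atTop := by
  have hlog : Tendsto (fun p => (α * lam1 + (2 - α) * lam0) * log p) (𝓝[<] 1) (𝓝 0) := by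
    have : ContinuousAt (fun p => (α * lam1 + (2 - α) * lam0) * log p) 1 := by
      fun_prop (disch := norm_num)
    simpa using this.tendsto.mono_left nhdsWithin_le_nhds
  have hlog_one_sub : Tendsto (fun p => -(((2 + α) * lam1 + (1 - α) * lam0) * log (1 - p)))
      (𝓝[<] 1) atTop :=
    tendsto_neg_atBot_atTop.comp
      ((tendsto_log_nhdsGT_zero.comp tendsto_one_sub_nhdsLT_one).const_mul_atBot (by nlinarith))
  have hqTerm := (continuousAt_qTerm_qOf (lam0 := lam0) (lam1 := lam1) hα0 hα1
    ((div_lt_one (by linarith)).2 (by linarith)) le_rfl).tendsto.mono_left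
    (nhdsWithin_le_nhds (s := Iio 1))
  exact ((hlog.add_atTop hlog_one_sub).atTop_add hqTerm).congr fun p => by
    simp only [reducedEq, sub_eq_add_neg]

lemma existsUnique_reducedEq_eq_zero (h0 : 0 < lam0) (h1 : 0 < lam1) (hα0 : 0 < α)
    (hα1 : α < 1) : ∃! p, p ∈ Ioo (α / (2 - α)) 1 ∧ reducedEq lam0 lam1 α p = 0 := by
  have ha : α / (2 - α) < 1 := (div_lt_one (by linarith)).2 (by linarith)
  obtain ⟨p, hp, hp0⟩ := (continuousOn_reducedEq hα0 hα1).surjOn_of_tendsto (nonempty_Ioo.2 ha)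
    ((tendsto_comp_coe_Ioo_atBot ha).2 (tendsto_reducedEq_nhdsGT_div_two_sub h0 h1 hα0 hα1))
    ((tendsto_comp_coe_Ioo_atTop ha).2 (tendsto_reducedEq_nhdsLT_one h0 h1 hα0 hα1))
    (mem_univ 0)
  exact ⟨p, ⟨hp, hp0⟩, fun p' ⟨hp', hp'0⟩ =>
    (strictMonoOn_reducedEq h0 h1 hα0 hα1).injOn hp' hp (hp'0.trans hp0.symm)⟩

end reducedEq

lemma firstEq_iff {α p q : ℝ} (hα0 : 0 < α) (hα1 : α < 1) :
    p ∈ Ioo (0 : ℝ) 1 ∧ q ∈ Ioo (0 : ℝ) 1 ∧ 2 * p * q = α * (2 + p - q) ↔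
      p ∈ Ioo (α / (2 - α)) 1 ∧ q = qOf α p := by
  constructor
  · rintro ⟨hp, hq, h⟩
    have hqp := (two_mul_mul_eq_iff_eq_qOf (by linarith [hp.1])).1 h
    exact ⟨⟨(qOf_lt_one_iff (by linarith) (by linarith [hp.1])).1 (hqp ▸ hq.2), hp.2⟩, hqp⟩
  · rintro ⟨hp, rfl⟩
    have hp0 : 0 < p := (div_pos hα0 (by linarith)).trans hp.1
    have hq := qOf_mem_Ioo hα0 hα1 hp.1 hp.2.le
    exact ⟨⟨hp0, hp.2⟩, ⟨hα0.trans hq.1, hq.2⟩, (two_mul_mul_eq_iff_eq_qOf (by linarith)).2 rfl⟩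

/-- For `λ₀, λ₁ > 0` and `α ∈ (0,1)` there is exactly one pair `(p,q) ∈ (0,1)²` satisfying
`2pq = α(2+p-q)` and `α(λ₁-λ₀) log(p(1-q)/((1-p)q)) + λ₀ log(p²(1-q)/(1-p))
- 2λ₁ log(1-p) = 0`. -/
theorem stmt4 (lam0 lam1 : ℝ) (h0 : 0 < lam0) (h1 : 0 < lam1)
    (α : ℝ) (hα : α ∈ Set.Ioo (0 : ℝ) 1) :
    ∃! pq : ℝ × ℝ, pq.1 ∈ Set.Ioo (0 : ℝ) 1 ∧ pq.2 ∈ Set.Ioo (0 : ℝ) 1 ∧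
      2 * pq.1 * pq.2 = α * (2 + pq.1 - pq.2) ∧
      α * (lam1 - lam0) * Real.log (pq.1 * (1 - pq.2) / ((1 - pq.1) * pq.2)) +
        lam0 * Real.log (pq.1 ^ 2 * (1 - pq.2) / (1 - pq.1)) -
        2 * lam1 * Real.log (1 - pq.1) = 0 := by
  obtain ⟨hα0, hα1⟩ := hα
  obtain ⟨p, ⟨hp, hp0⟩, huniq⟩ := existsUnique_reducedEq_eq_zero h0 h1 hα0 hα1
  refine ⟨(p, qOf α p), ?_, ?_⟩
  · obtain ⟨hp', hq', hfirst⟩ := (firstEq_iff hα0 hα1).2 ⟨hp, rfl⟩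
    exact ⟨hp', hq', hfirst, (secondEq_lhs_eq hp' hq').trans hp0⟩
  · rintro ⟨p', q'⟩ ⟨hp', hq', hfirst, hsecond⟩
    obtain ⟨hpa, rfl⟩ := (firstEq_iff (p := p') (q := q') hα0 hα1).1 ⟨hp', hq', hfirst⟩
    rw [secondEq_lhs_eq hp' hq'] at hsecond
    rw [huniq p' ⟨hpa, hsecond⟩]
end

section
/- Let λ_0, λ_1 > 0 with e^{-λ_0} + e^{-λ_1} ≤ 1, and let p, q ∈ (0,1). Then for μ_{p,q}-almost every ω ∈ Σ, lim_{n→∞} [log ν_{p,q}(π(C_n(ω))) / log diam π(C_n(ω))] = ((2-q)H(p) + pH(q)) / (2pλ_1 + (2-p-q)λ_0), where C_n(ω) = {τ ∈ Σ : τ_k = ω_k for all k ≤ n}. -/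
open Filter Set MeasureTheory
open scoped ENNReal

/-- The metric `d(ω,τ) = 2^{-min{n : ω_n ≠ τ_n}}` on `Σ = {0,1}^ℕ`
(coordinate `i : ℕ` represents the paper's `ω_{i+1}`). -/
noncomputable instance : MetricSpace (ℕ → Fin 2) := PiNat.metricSpace

/-- The Borel σ-algebra on `Σ`. -/
instance : MeasurableSpace (ℕ → Fin 2) := borel _

instance : BorelSpace (ℕ → Fin 2) := ⟨rfl⟩

/-- The cylinder `[ω_1 ⋯ ω_n] = {τ ∈ Σ : τ_k = ω_k for all k ≤ n}` (0-indexed). -/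
def cyl (ω : ℕ → Fin 2) (n : ℕ) : Set (ℕ → Fin 2) := {τ | ∀ k < n, τ k = ω k}

/-- The value `∏_{k=1}^{⌈n/2⌉} p_{ω_{2k-1}} ⬝ ∏_{k=1}^{⌊n/2⌋} p_{ω_k ω_{2k}}` prescribed for the
measure of the cylinder `[ω_1 ⋯ ω_n]`, where `p_0 = 1-p`, `p_1 = p`, `p_{00} = 1-p`,
`p_{01} = p`, `p_{10} = 1-q`, `p_{11} = q` (0-indexed: the paper's odd positions
`2k-1` become `2j` and the pairs `(k, 2k)` become `(j, 2j+1)`). -/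
noncomputable def cylMass (p q : ℝ) (ω : ℕ → Fin 2) (n : ℕ) : ℝ :=
  (∏ k ∈ Finset.range ((n + 1) / 2), (if ω (2 * k) = 1 then p else 1 - p)) *
  (∏ k ∈ Finset.range (n / 2),
    (if ω k = 1 then (if ω (2 * k + 1) = 1 then q else 1 - q)
     else (if ω (2 * k + 1) = 1 then p else 1 - p)))

/-- The maps `f_0(x) = e^{-λ₀} x` and `f_1(x) = e^{-λ₁} x + 1 - e^{-λ₁}`. -/
noncomputable def fdig (lam0 lam1 : ℝ) : Fin 2 → ℝ → ℝ := fun i x =>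
  if i = 1 then Real.exp (-lam1) * x + 1 - Real.exp (-lam1) else Real.exp (-lam0) * x

/-- `f_{ω_1} ∘ f_{ω_2} ∘ ⋯ ∘ f_{ω_n}` (0-indexed: `ω i` is the paper's `ω_{i+1}`). -/
noncomputable def prefixIter (lam0 lam1 : ℝ) (ω : ℕ → Fin 2) : ℕ → ℝ → ℝ
  | 0 => fun x => x
  | n + 1 => fun x => prefixIter lam0 lam1 ω n (fdig lam0 lam1 (ω n) x)

/-- The coding map `π(ω) = lim_{n→∞} f_{ω_1} ∘ f_{ω_2} ∘ ⋯ ∘ f_{ω_n}(0)`. -/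
noncomputable def piMap (lam0 lam1 : ℝ) (ω : ℕ → Fin 2) : ℝ :=
  limUnder atTop (fun n => prefixIter lam0 lam1 ω n 0)

/-- The entropy function `H(p) = -p log p - (1-p) log(1-p)` (with `H(0) = H(1) = 0`,
which holds automatically since `Real.log 0 = 0`). -/
noncomputable def Hent (p : ℝ) : ℝ := -p * Real.log p - (1 - p) * Real.log (1 - p)

/-!
Under `μ_{p,q}` the digits along each chain `i, 2i, 4i, …` (1-indexed, `i` odd) form a Markov
chain, and different chains are independent. Both `log μ(C_n(ω))` and
`log diam π(C_n(ω)) = -∑_{k<n} λ_{ω_k}` are sums of bounded functions of these chains, and two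
summands are correlated only when their chains of ancestors meet, which happens for `O(n)` of the
`n²` pairs. So the sums have variance `O(n)`, and Chebyshev's inequality with Borel–Cantelli
along the squares gives a strong law of large numbers; the means follow from `P(ω_{2i} = 1) = p`
and `P(ω_{2i+1} = 1) = p + (q - p) P(ω_i = 1)`. Finally `ν(π(C_n(ω))) = μ(C_n(ω))`: by the open
set condition the only other sequences coded into the interval spanned by `π(C_n(ω))` are
eventually constant, and these form a countable null set.
-/

open scoped Topology

theorem tendsto_div_of_abs_sub_mul_le {u : ℕ → ℝ} {Λ K : ℝ} (h : ∀ n, |u n - Λ * n| ≤ K) :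
    Tendsto (fun n => u n / n) atTop (𝓝 Λ) := by
  refine tendsto_iff_norm_sub_tendsto_zero.2 <| squeeze_zero' (.of_forall fun _ => norm_nonneg _)
    ?_ (tendsto_const_div_atTop_nhds_zero_nat K)
  filter_upwards [eventually_gt_atTop 0] with n hn
  have hn : (0 : ℝ) < n := Nat.cast_pos.2 hn
  rw [Real.norm_eq_abs, div_sub' hn.ne', abs_div, abs_of_pos hn, mul_comm]
  exact div_le_div_of_nonneg_right (h n) hn.le

theorem abs_sub_le_mul_of_abs_sub_succ_le {u : ℕ → ℝ} {G : ℝ} (hG : ∀ n, |u (n + 1) - u n| ≤ G)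
    {m n : ℕ} (hmn : m ≤ n) : |u n - u m| ≤ G * (n - m) := by
  have := dist_le_Ico_sum_of_dist_le (f := u) hmn (d := fun _ => G)
    fun _ _ => by rw [Real.dist_eq, abs_sub_comm]; exact hG _
  rwa [Finset.sum_const, Nat.card_Ico, nsmul_eq_mul, Nat.cast_sub hmn, mul_comm,
    Real.dist_eq, abs_sub_comm] at this

theorem tendsto_div_of_tendsto_sq_div {u : ℕ → ℝ} {G : ℝ} (hG : ∀ n, |u (n + 1) - u n| ≤ G)
    (hsq : Tendsto (fun j : ℕ => u (j ^ 2) / (j ^ 2 : ℕ)) atTop (𝓝 0)) :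
    Tendsto (fun n => u n / n) atTop (𝓝 0) := by
  have hG0 : 0 ≤ G := (abs_nonneg _).trans (hG 0)
  have hsqrt : Tendsto Nat.sqrt atTop atTop :=
    tendsto_atTop_atTop_of_monotone (fun _ _ h => Nat.sqrt_le_sqrt h)
      fun j => ⟨j ^ 2, (Nat.sqrt_eq' j).ge⟩
  have hbound : Tendsto (fun n : ℕ => |u (n.sqrt ^ 2) / (n.sqrt ^ 2 : ℕ)| + 2 * G / n.sqrt) atTop
      (𝓝 0) := by
    simpa using ((hsq.comp hsqrt).abs).add
      ((tendsto_const_div_atTop_nhds_zero_nat (2 * G)).comp hsqrt)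
  refine squeeze_zero_norm' ?_ hbound
  filter_upwards [eventually_ge_atTop 1] with n hn
  set j := n.sqrt
  have hj : 1 ≤ j := Nat.le_sqrt.2 (by simpa using hn)
  have hjn : j ^ 2 ≤ n := Nat.sqrt_le' n
  have hnj : n ≤ j ^ 2 + 2 * j := by have := Nat.lt_succ_sqrt' n; nlinarith
  have hn0 : (0 : ℝ) < n := by exact_mod_cast hn
  have hstep : |u n| ≤ |u (j ^ 2)| + G * (2 * j) := by
    have h := abs_sub_le_mul_of_abs_sub_succ_le hG hjn
    have : (n : ℝ) - ((j ^ 2 : ℕ) : ℝ) ≤ 2 * j := by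
      have : (n : ℝ) ≤ (j ^ 2 + 2 * j : ℕ) := by exact_mod_cast hnj
      push_cast at this ⊢; linarith
    calc |u n| ≤ |u (j ^ 2)| + |u n - u (j ^ 2)| := by
          linarith [abs_sub_abs_le_abs_sub (u n) (u (j ^ 2))]
      _ ≤ _ := by gcongr; exact h.trans (by gcongr)
  rw [Real.norm_eq_abs, abs_div, abs_of_pos hn0, abs_div,
    abs_of_pos (by positivity : (0 : ℝ) < ((j ^ 2 : ℕ) : ℝ))]
  calc |u n| / n ≤ (|u (j ^ 2)| + G * (2 * j)) / n := by gcongr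
    _ ≤ |u (j ^ 2)| / ((j ^ 2 : ℕ) : ℝ) + G * (2 * j) / ((j ^ 2 : ℕ) : ℝ) := by
        rw [add_div]; gcongr
    _ = |u (j ^ 2)| / ((j ^ 2 : ℕ) : ℝ) + 2 * G / j := by
        push_cast; field_simp

theorem ae_tendsto_sq_div_of_tail_le {α : Type*} [MeasurableSpace α] {μ : Measure α}
    {X : ℕ → α → ℝ} {C : ℝ}
    (htail : ∀ n (a : ℝ), 0 < a → μ {ω | a ≤ |X n ω|} ≤ ENNReal.ofReal (C * n / a ^ 2)) :
    ∀ᵐ ω ∂μ, Tendsto (fun j : ℕ => X (j ^ 2) ω / (j ^ 2 : ℕ)) atTop (𝓝 0) := by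
  have hsum (i : ℕ) :
      ∑' j : ℕ, μ {ω | ((j + 1 : ℕ) ^ 2 : ℝ) / (i + 1) ≤ |X ((j + 1) ^ 2) ω|} ≠ ⊤ := by
    have hb (j : ℕ) : μ {ω | ((j + 1 : ℕ) ^ 2 : ℝ) / (i + 1) ≤ |X ((j + 1) ^ 2) ω|} ≤
        ENNReal.ofReal (|C| * (i + 1) ^ 2 * (1 / ((j : ℝ) + 1) ^ 2)) := by
      refine (htail _ _ (by positivity)).trans (ENNReal.ofReal_le_ofReal ?_)
      have : C * ((j + 1) ^ 2 : ℕ) / (((j + 1 : ℕ) ^ 2 : ℝ) / (i + 1)) ^ 2 =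
          C * (i + 1) ^ 2 * (1 / ((j : ℝ) + 1) ^ 2) := by
        push_cast; field_simp
      rw [this]; gcongr; exact le_abs_self C
    have hs : Summable fun j : ℕ => |C| * (i + 1) ^ 2 * (1 / ((j : ℝ) + 1) ^ 2) :=
      ((summable_nat_add_iff 1).2 (Real.summable_one_div_nat_pow.2 one_lt_two)).mul_left
        (|C| * (i + 1) ^ 2) |>.congr fun j => by push_cast; ring
    refine ne_top_of_le_ne_top ?_ (ENNReal.tsum_le_tsum hb)
    rw [← ENNReal.ofReal_tsum_of_nonneg (fun j => by positivity) hs]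
    exact ENNReal.ofReal_ne_top
  have hae : ∀ᵐ ω ∂μ, ∀ i : ℕ, ∀ᶠ j in atTop,
      |X ((j + 1) ^ 2) ω| < ((j + 1 : ℕ) ^ 2 : ℝ) / (i + 1) :=
    ae_all_iff.2 fun i => (ae_eventually_notMem (hsum i)).mono fun ω hω => hω.mono
      fun j hj => not_le.1 hj
  filter_upwards [hae] with ω hω
  refine (tendsto_add_atTop_iff_nat 1).1 (Metric.tendsto_atTop.2 fun ε hε => ?_)
  obtain ⟨i, hi⟩ := exists_nat_one_div_lt hε
  obtain ⟨J, hJ⟩ := eventually_atTop.1 (hω i)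
  refine ⟨J, fun j hj => ?_⟩
  have hpos : (0 : ℝ) < ((j + 1 : ℕ) ^ 2 : ℝ) := by positivity
  rw [Real.dist_eq, sub_zero, abs_div, Nat.cast_pow, abs_of_pos hpos, div_lt_iff₀ hpos]
  calc |X ((j + 1) ^ 2) ω| < ((j + 1 : ℕ) ^ 2 : ℝ) / (i + 1) := hJ j hj
    _ ≤ ε * ((j + 1 : ℕ) ^ 2 : ℝ) := by
        rw [div_eq_mul_one_div, mul_comm]; gcongr

theorem ae_tendsto_div_of_tail_le {α : Type*} [MeasurableSpace α] {μ : Measure α}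
    {S : ℕ → α → ℝ} {M : ℕ → ℝ} {G C Λ : ℝ} (hS : ∀ n ω, |S (n + 1) ω - S n ω| ≤ G)
    (hM : ∀ n, |M (n + 1) - M n| ≤ G) (hMlim : Tendsto (fun n => M n / n) atTop (𝓝 Λ))
    (htail : ∀ n (a : ℝ), 0 < a → μ {ω | a ≤ |S n ω - M n|} ≤ ENNReal.ofReal (C * n / a ^ 2)) :
    ∀ᵐ ω ∂μ, Tendsto (fun n => S n ω / n) atTop (𝓝 Λ) := by
  filter_upwards [ae_tendsto_sq_div_of_tail_le htail] with ω hω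
  have hinc (n : ℕ) : |(S (n + 1) ω - M (n + 1)) - (S n ω - M n)| ≤ G + G := by
    rw [sub_sub_sub_comm]; exact (abs_sub _ _).trans (add_le_add (hS n ω) (hM n))
  simpa [← add_div] using
    (tendsto_div_of_tendsto_sq_div (u := fun n => S n ω - M n) hinc hω).add hMlim

theorem abs_le_of_abs_le_mul_half {D : ℕ → ℝ} {t c : ℝ} (ht : 0 ≤ t) (ht1 : t < 1)
    (h0 : |D 0| ≤ c / (1 - t)) (h : ∀ n, 1 ≤ n → |D n| ≤ t * |D (n / 2)| + c) (n : ℕ) :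
    |D n| ≤ c / (1 - t) := by
  induction n using Nat.strong_induction_on with
  | _ n ih =>
    rcases Nat.eq_zero_or_pos n with rfl | hn
    · exact h0
    calc |D n| ≤ t * (c / (1 - t)) + c := (h n hn).trans (by gcongr; exact ih _ (by omega))
      _ = c / (1 - t) := by have : 1 - t ≠ 0 := (sub_pos.2 ht1).ne'; field_simp; ring

lemma abs_natCast_div_two_sub_le (n : ℕ) : |((n / 2 : ℕ) : ℝ) - n / 2| ≤ 1 := by
  rw [abs_le]; constructor
  · have : (n : ℝ) ≤ 2 * (n / 2 : ℕ) + 1 := by norm_cast; omega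
    linarith
  · have : 2 * ((n / 2 : ℕ) : ℝ) ≤ n := by norm_cast; omega
    linarith

@[to_additive]
theorem prod_range_eq_prod_even_mul_prod_odd {M : Type*} [CommMonoid M] (g : ℕ → M) (n : ℕ) :
    ∏ k ∈ Finset.range n, g k =
        (∏ i ∈ Finset.range ((n + 1) / 2), g (2 * i)) *
        ∏ i ∈ Finset.range (n / 2), g (2 * i + 1) := by
  have heven (m : ℕ) : ∏ k ∈ Finset.range (2 * m), g k =
      (∏ i ∈ Finset.range m, g (2 * i)) * ∏ i ∈ Finset.range m, g (2 * i + 1) := by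
    induction m with
    | zero => simp
    | succ m ih =>
      rw [show 2 * (m + 1) = 2 * m + 1 + 1 by ring, Finset.prod_range_succ, Finset.prod_range_succ,
        ih, Finset.prod_range_succ, Finset.prod_range_succ]
      ac_rfl
  obtain ⟨m, rfl | rfl⟩ := Nat.even_or_odd' n
  · rw [heven, show (2 * m + 1) / 2 = m by omega, show 2 * m / 2 = m by omega]
  · rw [Finset.prod_range_succ, heven, show (2 * m + 1 + 1) / 2 = m + 1 by omega,
      show (2 * m + 1) / 2 = m by omega, Finset.prod_range_succ]
    ac_rfl

section Model

variable {p q : ℝ}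

def bernoulliWeight (r : ℝ) (x : Fin 2) : ℝ := if x = 1 then r else 1 - r

@[simp]
lemma sum_bernoulliWeight (r : ℝ) : ∑ x, bernoulliWeight r x = 1 := by
  simp [bernoulliWeight, Fin.sum_univ_two]

lemma bernoulliWeight_nonneg {r : ℝ} (hr : r ∈ Icc 0 1) (x : Fin 2) :
    0 ≤ bernoulliWeight r x := by
  unfold bernoulliWeight; split_ifs <;> linarith [hr.1, hr.2]

lemma bernoulliWeight_pos {r : ℝ} (hr : r ∈ Ioo 0 1) (x : Fin 2) : 0 < bernoulliWeight r x := by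
  unfold bernoulliWeight; split_ifs <;> linarith [hr.1, hr.2]

lemma bernoulliWeight_le_max (r : ℝ) (x : Fin 2) : bernoulliWeight r x ≤ max r (1 - r) := by
  unfold bernoulliWeight; split_ifs <;> simp

lemma sum_bernoulliWeight_mul_log (r : ℝ) :
    ∑ x, bernoulliWeight r x * Real.log (bernoulliWeight r x) = -Hent r := by
  simp [bernoulliWeight, Fin.sum_univ_two, Hent]

def parent (j : ℕ) : ℕ := (j - 1) / 2

lemma parent_lt {j : ℕ} (hj : ¬ Even j) : parent j < j := by
  rw [Nat.not_even_iff_odd] at hj; obtain ⟨m, rfl⟩ := hj; simp [parent]; omega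

lemma parent_two_mul_add_one (i : ℕ) : parent (2 * i + 1) = i := by simp [parent]

/-- The conditional probability that digit `j` is `1` given the earlier ones: the paper's pairs
`(k, 2k)` (1-indexed) are the pairs `(parent j, j)` with `j` odd. -/
def condParam (p q : ℝ) (j : ℕ) (ω : ℕ → Fin 2) : ℝ :=
  if ¬ Even j ∧ ω (parent j) = 1 then q else p

def condProb (p q : ℝ) (j : ℕ) (ω : ℕ → Fin 2) : ℝ := bernoulliWeight (condParam p q j ω) (ω j)

lemma condParam_eq_or (j : ℕ) (ω : ℕ → Fin 2) :
    condParam p q j ω = p ∨ condParam p q j ω = q := by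
  unfold condParam; split_ifs <;> simp

lemma condParam_mem {s : Set ℝ} (hp : p ∈ s) (hq : q ∈ s) (j : ℕ) (ω : ℕ → Fin 2) :
    condParam p q j ω ∈ s := by
  rcases condParam_eq_or j ω with h | h <;> rw [h] <;> assumption

lemma dependsOn_condParam {j : ℕ} {s : Set ℕ} (hs : ¬ Even j → parent j ∈ s) :
    DependsOn (condParam p q j) s := by
  intro ω ω' h
  by_cases hj : Even j
  · simp [condParam, hj]
  · simp [condParam, hj, h _ (hs hj)]

lemma condParam_update (j : ℕ) (ω : ℕ → Fin 2) (x : Fin 2) :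
    condParam p q j (Function.update ω j x) = condParam p q j ω :=
  dependsOn_condParam (s := {j}ᶜ) (fun hj => (parent_lt hj).ne) fun _ hi =>
    Function.update_of_ne hi _ _

lemma condProb_update (j : ℕ) (ω : ℕ → Fin 2) (x : Fin 2) :
    condProb p q j (Function.update ω j x) = bernoulliWeight (condParam p q j ω) x := by
  rw [condProb, condParam_update, Function.update_self]

lemma cylMass_eq_prod (p q : ℝ) (ω : ℕ → Fin 2) (n : ℕ) :
    cylMass p q ω n = ∏ j ∈ Finset.range n, condProb p q j ω := by
  rw [prod_range_eq_prod_even_mul_prod_odd, cylMass]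
  congr 1 <;> refine Finset.prod_congr rfl fun i _ => ?_
  · simp [condProb, condParam, bernoulliWeight]
  · simp only [condProb, condParam, bernoulliWeight, parent_two_mul_add_one, Nat.not_even_bit1,
      not_false_eq_true, true_and]
    split_ifs <;> rfl

end Model

section CylExpect

variable {p q : ℝ}

open Function in
def integrateCoord (p q : ℝ) (j : ℕ) : ((ℕ → Fin 2) → ℝ) →ₗ[ℝ] ((ℕ → Fin 2) → ℝ) where
  toFun f ω := ∑ x, condProb p q j (update ω j x) * f (update ω j x)
  map_add' f g := by ext ω; simp [mul_add, Finset.sum_add_distrib]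
  map_smul' c f := by
    ext ω
    simp only [Pi.smul_apply, smul_eq_mul, RingHom.id_apply, Finset.mul_sum]
    exact Finset.sum_congr rfl fun x _ => mul_left_comm _ _ _

/-- The expectation under `μ_{p,q}` of a function of the first `N` digits; the later digits are
read as `0`. -/
def cylExpect (p q : ℝ) : ℕ → ((ℕ → Fin 2) → ℝ) →ₗ[ℝ] ℝ
  | 0 => LinearMap.proj 0
  | N + 1 => (cylExpect p q N).comp (integrateCoord p q N)

lemma integrateCoord_apply (j : ℕ) (f : (ℕ → Fin 2) → ℝ) (ω : ℕ → Fin 2) :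
    integrateCoord p q j f ω =
      ∑ x, bernoulliWeight (condParam p q j ω) x * f (Function.update ω j x) := by
  simp [integrateCoord, condProb_update]

lemma cylExpect_succ (N : ℕ) (f : (ℕ → Fin 2) → ℝ) :
    cylExpect p q (N + 1) f = cylExpect p q N (integrateCoord p q N f) := rfl

lemma integrateCoord_mul_left {j : ℕ} {f : (ℕ → Fin 2) → ℝ} (hf : DependsOn f {j}ᶜ)
    (g : (ℕ → Fin 2) → ℝ) : integrateCoord p q j (f * g) = f * integrateCoord p q j g := by
  ext ω
  simp only [integrateCoord_apply, Pi.mul_apply, Finset.mul_sum]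
  refine Finset.sum_congr rfl fun x _ => ?_
  rw [hf fun i hi => Function.update_of_ne hi _ _]
  ring

lemma integrateCoord_of_dependsOn {j : ℕ} {f : (ℕ → Fin 2) → ℝ} (hf : DependsOn f {j}ᶜ) :
    integrateCoord p q j f = f := by
  have hone : integrateCoord p q j 1 = 1 := by
    ext ω; simp only [integrateCoord_apply, Pi.one_apply, mul_one, sum_bernoulliWeight]
  simpa [hone] using integrateCoord_mul_left (p := p) (q := q) hf 1

lemma DependsOn.integrateCoord {j : ℕ} {s : Set ℕ} {f : (ℕ → Fin 2) → ℝ} (hf : DependsOn f s)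
    (hs : ¬ Even j → parent j ∈ s) : DependsOn (integrateCoord p q j f) (s \ {j}) := by
  intro ω ω' h
  simp only [integrateCoord_apply]
  rw [dependsOn_condParam (s := s \ {j}) (fun hj => ⟨hs hj, (parent_lt hj).ne⟩) h]
  refine Finset.sum_congr rfl fun x _ => congrArg _ (hf fun i hi => ?_)
  by_cases hij : i = j
  · simp [hij]
  · simp [Function.update_of_ne hij, h i ⟨hi, hij⟩]

lemma integrateCoord_mono (hp : p ∈ Icc 0 1) (hq : q ∈ Icc 0 1) (j : ℕ)
    {f g : (ℕ → Fin 2) → ℝ} (hfg : f ≤ g) : integrateCoord p q j f ≤ integrateCoord p q j g :=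
  fun ω => by
    simp only [integrateCoord_apply]
    gcongr with x
    · exact bernoulliWeight_nonneg (condParam_mem hp hq j ω) x
    · exact hfg _

lemma cylExpect_mono (hp : p ∈ Icc 0 1) (hq : q ∈ Icc 0 1) (N : ℕ)
    {f g : (ℕ → Fin 2) → ℝ} (hfg : f ≤ g) : cylExpect p q N f ≤ cylExpect p q N g := by
  induction N generalizing f g with
  | zero => exact hfg 0
  | succ N ih => exact ih (integrateCoord_mono hp hq N hfg)

@[simp]
lemma cylExpect_const (N : ℕ) (c : ℝ) : cylExpect p q N (fun _ => c) = c := by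
  induction N with
  | zero => rfl
  | succ N ih => rw [cylExpect_succ, integrateCoord_of_dependsOn (fun _ _ _ => rfl), ih]

lemma abs_cylExpect_le (hp : p ∈ Icc 0 1) (hq : q ∈ Icc 0 1) (N : ℕ)
    {f : (ℕ → Fin 2) → ℝ} {B : ℝ} (hf : ∀ ω, |f ω| ≤ B) : |cylExpect p q N f| ≤ B := by
  rw [abs_le]
  constructor
  · simpa using cylExpect_mono hp hq N (f := fun _ => -B) fun ω => (abs_le.1 (hf ω)).1
  · simpa using cylExpect_mono hp hq N (g := fun _ => B) fun ω => (abs_le.1 (hf ω)).2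

lemma cylExpect_succ_of_dependsOn {N : ℕ} {f : (ℕ → Fin 2) → ℝ} (hf : DependsOn f (Iio N)) :
    cylExpect p q (N + 1) f = cylExpect p q N f := by
  rw [cylExpect_succ, integrateCoord_of_dependsOn (hf.mono fun _ hi => hi.ne)]

lemma cylExpect_of_dependsOn {n N : ℕ} {f : (ℕ → Fin 2) → ℝ} (hf : DependsOn f (Iio n))
    (hnN : n ≤ N) : cylExpect p q N f = cylExpect p q n f := by
  induction N, hnN using Nat.le_induction with
  | base => rfl
  | succ N hnN ih => rw [cylExpect_succ_of_dependsOn (hf.mono (Iio_subset_Iio hnN)), ih]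

lemma cylExpect_integrateCoord {k N : ℕ} {f : (ℕ → Fin 2) → ℝ} (hf : DependsOn f (Iio (k + 1)))
    (hkN : k < N) : cylExpect p q N (integrateCoord p q k f) = cylExpect p q N f := by
  have hf' : DependsOn (integrateCoord p q k f) (Iio k) := by
    refine (hf.integrateCoord fun hk => ?_).mono fun i hi => ?_
    · simpa using (parent_lt hk).le
    · simp only [Set.mem_sdiff, mem_Iio, mem_singleton_iff] at hi; simp only [mem_Iio]; omega
  rw [cylExpect_of_dependsOn hf' hkN.le, cylExpect_of_dependsOn hf hkN, cylExpect_succ]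

end CylExpect

section Independence

variable {p q : ℝ}

def ParentClosed (A : Set ℕ) : Prop := ∀ j ∈ A, ¬ Even j → parent j ∈ A

lemma ParentClosed.dependsOn_integrateCoord {A : Set ℕ} (hA : ParentClosed A) {j : ℕ}
    {f : (ℕ → Fin 2) → ℝ} (hf : DependsOn f A) :
    DependsOn (integrateCoord p q j f) (A \ {j}) := by
  by_cases hj : j ∈ A
  · exact hf.integrateCoord (hA j hj)
  · rw [integrateCoord_of_dependsOn (hf.mono fun i hi (h : i = j) => hj (h ▸ hi))]
    exact hf.mono fun i hi => ⟨hi, fun h => hj (h ▸ hi)⟩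

theorem cylExpect_mul_of_disjoint {N : ℕ} {A B : Set ℕ} {f g : (ℕ → Fin 2) → ℝ}
    (hA : ParentClosed A) (hB : ParentClosed B) (hAB : Disjoint A B) (hAN : A ⊆ Iio N)
    (hBN : B ⊆ Iio N) (hf : DependsOn f A) (hg : DependsOn g B) :
    cylExpect p q N (f * g) = cylExpect p q N f * cylExpect p q N g := by
  induction N generalizing A B f g with
  | zero => rfl
  | succ N ih =>
    -- integrating out the last digit `N` only affects the factor whose set contains it
    wlog hNB : N ∉ B generalizing A B f g
    · have hNA : N ∉ A := fun h => Set.disjoint_left.1 hAB h (not_not.1 hNB)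
      rw [mul_comm f g, this hB hA hAB.symm hBN hAN hg hf hNA, mul_comm]
    have hBN' : B ⊆ Iio N := fun i hi =>
      lt_of_le_of_ne (Nat.lt_succ_iff.1 (hBN hi)) fun h => hNB (h ▸ hi)
    have hAN' : A \ {N} ⊆ Iio N := fun i hi => lt_of_le_of_ne (Nat.lt_succ_iff.1 (hAN hi.1)) hi.2
    have hA' : ParentClosed (A \ {N}) := fun j hj hodd =>
      ⟨hA j hj.1 hodd, ((parent_lt hodd).trans_le (Nat.lt_succ_iff.1 (hAN hj.1))).ne⟩
    have hg' : DependsOn g {N}ᶜ := hg.mono fun i hi => (hBN' hi).ne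
    rw [cylExpect_succ, cylExpect_succ, cylExpect_succ_of_dependsOn (hg.mono hBN'), mul_comm f g,
      integrateCoord_mul_left hg', mul_comm]
    exact ih hA' hB (hAB.mono_left sdiff_subset) hAN' hBN' (hA.dependsOn_integrateCoord hf) hg

end Independence

section Bridge

variable {p q : ℝ}

/-- `μ` is the measure `μ_{p,q}` of the paper. -/
def HasCylMass (p q : ℝ) (μ : Measure (ℕ → Fin 2)) : Prop :=
  ∀ (ω : ℕ → Fin 2) (n : ℕ), 1 ≤ n → μ (cyl ω n) = ENNReal.ofReal (cylMass p q ω n)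

lemma cylMass_nonneg (hp : p ∈ Icc 0 1) (hq : q ∈ Icc 0 1) (ω : ℕ → Fin 2) (n : ℕ) :
    0 ≤ cylMass p q ω n := by
  rw [cylMass_eq_prod]
  exact Finset.prod_nonneg fun j _ => bernoulliWeight_nonneg (condParam_mem hp hq j ω) _

lemma measurableSet_cyl (ω : ℕ → Fin 2) (n : ℕ) : MeasurableSet (cyl ω n) :=
  (PiNat.isOpen_cylinder (E := fun _ => Fin 2) ω n).measurableSet

lemma cylExpect_indicator_cyl (ω : ℕ → Fin 2) (N : ℕ) :
    cylExpect p q N ((cyl ω N).indicator 1) = cylMass p q ω N := by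
  induction N with
  | zero => simp [cylExpect, cylMass, cyl]
  | succ N ih =>
    have hint : integrateCoord p q N ((cyl ω (N + 1)).indicator 1) =
        condProb p q N ω • (cyl ω N).indicator 1 := by
      classical
      ext τ
      have hupd (x : Fin 2) : Function.update τ N x ∈ cyl ω (N + 1) ↔ τ ∈ cyl ω N ∧ x = ω N := by
        simp only [cyl, mem_ofPred_eq, Nat.lt_succ_iff_lt_or_eq, or_imp, forall_and,
          forall_eq, Function.update_self]
        refine and_congr_left fun _ => forall₂_congr fun k hk => ?_
        rw [Function.update_of_ne hk.ne]
      by_cases hτ : τ ∈ cyl ω N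
      · have hpar : condParam p q N τ = condParam p q N ω :=
          dependsOn_condParam (s := Iio N) (fun h => parent_lt h) fun i hi => hτ i hi
        simp only [integrateCoord_apply, indicator_apply, hupd, hτ, true_and, Pi.one_apply,
          mul_ite, mul_one, mul_zero, Finset.sum_ite_eq', Finset.mem_univ, if_true,
          Pi.smul_apply, smul_eq_mul, condProb, hpar]
      · simp [integrateCoord_apply, hupd, hτ]
    rw [cylExpect_succ, hint, map_smul, ih, smul_eq_mul, cylMass_eq_prod, cylMass_eq_prod,
      Finset.prod_range_succ, mul_comm]

lemma measure_eq_cylExpect {μ : Measure (ℕ → Fin 2)} (hμ : HasCylMass p q μ)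
    (hp : p ∈ Icc 0 1) (hq : q ∈ Icc 0 1) {N : ℕ} (hN : 1 ≤ N) {S : Set (ℕ → Fin 2)}
    (hS : DependsOn (· ∈ S) (Iio N)) :
    μ S = ENNReal.ofReal (cylExpect p q N (S.indicator 1)) := by
  classical
  let r : (ℕ → Fin 2) → (Fin N → Fin 2) := fun τ i => τ i
  let pad : (Fin N → Fin 2) → ℕ → Fin 2 := fun w k => if h : k < N then w ⟨k, h⟩ else 0
  let W := (Finset.univ : Finset (Fin N → Fin 2)).filter (pad · ∈ S)
  have hcyl (w : Fin N → Fin 2) : r ⁻¹' {w} = cyl (pad w) N := by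
    ext τ
    simp only [mem_preimage, mem_singleton_iff, funext_iff, Fin.forall_iff, cyl, mem_ofPred_eq]
    exact forall₂_congr fun k hk => by simp [r, pad, hk]
  have hmem (τ : ℕ → Fin 2) : r τ ∈ W ↔ τ ∈ S := by
    simp only [W, Finset.mem_filter, Finset.mem_univ, true_and]
    exact iff_of_eq (hS fun k hk => by simp [r, pad, show k < N from hk])
  have hpre : r ⁻¹' W = S := Set.ext hmem
  have hind : S.indicator 1 = ∑ w ∈ W, (cyl (pad w) N).indicator (1 : (ℕ → Fin 2) → ℝ) := by
    ext τ
    simp only [Finset.sum_apply, ← hcyl, indicator_apply, mem_preimage, mem_singleton_iff,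
      Pi.one_apply, Finset.sum_ite_eq, hmem]
  calc μ S = ∑ w ∈ W, μ (cyl (pad w) N) := by
        rw [← hpre, ← sum_measure_preimage_singleton W fun w _ => hcyl w ▸ measurableSet_cyl _ _]
        simp only [hcyl]
    _ = ∑ w ∈ W, ENNReal.ofReal (cylMass p q (pad w) N) :=
        Finset.sum_congr rfl fun w _ => hμ _ _ hN
    _ = ENNReal.ofReal (cylExpect p q N (S.indicator 1)) := by
        rw [← ENNReal.ofReal_sum_of_nonneg fun w _ => cylMass_nonneg hp hq _ _, hind, map_sum]
        simp only [cylExpect_indicator_cyl]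

lemma measure_le_abs_sub_cylExpect_le {μ : Measure (ℕ → Fin 2)} (hμ : HasCylMass p q μ)
    (hp : p ∈ Icc 0 1) (hq : q ∈ Icc 0 1) {N : ℕ} (hN : 1 ≤ N) {V : (ℕ → Fin 2) → ℝ}
    (hV : DependsOn V (Iio N)) {a : ℝ} (ha : 0 < a) :
    μ {ω | a ≤ |V ω - cylExpect p q N V|} ≤
      ENNReal.ofReal (cylExpect p q N (fun ω => (V ω - cylExpect p q N V) ^ 2) / a ^ 2) := by
  set m := cylExpect p q N V
  rw [measure_eq_cylExpect hμ hp hq hN fun ω ω' h => by simp only [mem_ofPred_eq, hV h]]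
  refine ENNReal.ofReal_le_ofReal ?_
  rw [div_eq_inv_mul, ← smul_eq_mul, ← map_smul]
  refine cylExpect_mono hp hq N fun ω => ?_
  by_cases hω : a ≤ |V ω - m|
  · have : a ^ 2 ≤ (V ω - m) ^ 2 := by simpa using pow_le_pow_left₀ ha.le hω 2
    simp only [indicator_of_mem (show ω ∈ {ω | a ≤ |V ω - m|} from hω), Pi.one_apply,
      Pi.smul_apply, smul_eq_mul]
    rw [← div_eq_inv_mul, one_le_div (by positivity)]
    exact this
  · simp only [indicator_of_notMem (show ω ∉ {ω | a ≤ |V ω - m|} from hω), Pi.smul_apply,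
      smul_eq_mul]
    positivity

end Bridge

section Variance

variable {p q : ℝ}

open Classical in
theorem cylExpect_sq_sum_sub_le (hp : p ∈ Icc 0 1) (hq : q ∈ Icc 0 1) {N : ℕ} (s : Finset ℕ)
    {T : ℕ → (ℕ → Fin 2) → ℝ} {A : ℕ → Set ℕ} {G : ℝ} (hG : ∀ k ω, |T k ω| ≤ G)
    (hA : ∀ k, ParentClosed (A k)) (hAN : ∀ k ∈ s, A k ⊆ Iio N)
    (hT : ∀ k, DependsOn (T k) (A k)) :
    cylExpect p q N (fun ω => (∑ k ∈ s, T k ω - cylExpect p q N (∑ k ∈ s, T k)) ^ 2) ≤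
      4 * G ^ 2 * ((s ×ˢ s).filter fun kl => ¬ Disjoint (A kl.1) (A kl.2)).card := by
  set Z : ℕ → (ℕ → Fin 2) → ℝ := fun k ω => T k ω - cylExpect p q N (T k)
  have hsq : (fun ω => (∑ k ∈ s, T k ω - cylExpect p q N (∑ k ∈ s, T k)) ^ 2) =
      ∑ k ∈ s, ∑ l ∈ s, Z k * Z l := by
    ext ω
    simp only [map_sum, Finset.sum_apply, Pi.mul_apply, Z, ← Finset.sum_sub_distrib, sq,
      Finset.sum_mul_sum]
  have hZ (k : ℕ) : cylExpect p q N (Z k) = 0 := by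
    have : Z k = T k - fun _ => cylExpect p q N (T k) := rfl
    rw [this, map_sub, cylExpect_const, sub_self]
  have hZbd (k : ℕ) (ω : ℕ → Fin 2) : |Z k ω| ≤ 2 * G := by
    have := abs_cylExpect_le hp hq N (hG k)
    calc |Z k ω| ≤ |T k ω| + |cylExpect p q N (T k)| := abs_sub _ _
      _ ≤ 2 * G := by linarith [hG k ω]
  have hZdep (k : ℕ) : DependsOn (Z k) (A k) := fun ω ω' h => by simp only [Z, hT k h]
  have hterm : ∀ k ∈ s, ∀ l ∈ s, cylExpect p q N (Z k * Z l) ≤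
      if ¬ Disjoint (A k) (A l) then 4 * G ^ 2 else 0 := by
    intro k hk l hl
    by_cases h : Disjoint (A k) (A l)
    · rw [if_neg (not_not.2 h), cylExpect_mul_of_disjoint (hA k) (hA l) h (hAN k hk) (hAN l hl)
        (hZdep k) (hZdep l), hZ, zero_mul]
    · rw [if_pos h]
      refine (le_abs_self _).trans (abs_cylExpect_le hp hq N fun ω => ?_)
      rw [Pi.mul_apply, abs_mul]
      nlinarith [hZbd k ω, hZbd l ω, abs_nonneg (Z k ω), abs_nonneg (Z l ω)]
  calc _ = ∑ k ∈ s, ∑ l ∈ s, cylExpect p q N (Z k * Z l) := by rw [hsq]; simp only [map_sum]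
    _ ≤ ∑ k ∈ s, ∑ l ∈ s, if ¬ Disjoint (A k) (A l) then 4 * G ^ 2 else 0 :=
        Finset.sum_le_sum fun k hk => Finset.sum_le_sum fun l hl => hterm k hk l hl
    _ = _ := by
        rw [← Finset.sum_product' (f := fun k l => if ¬ Disjoint (A k) (A l) then 4 * G ^ 2 else 0),
          ← Finset.sum_filter, Finset.sum_const, nsmul_eq_mul, mul_comm]

end Variance

section Ancestors

/-- The chain `k, parent k, parent (parent k), …`, described through
`parent j + 1 = (j + 1) / 2` for odd `j`. -/
def ancestors (k : ℕ) : Set ℕ := {i | ∃ e, (i + 1) * 2 ^ e = k + 1}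

lemma self_mem_ancestors (k : ℕ) : k ∈ ancestors k := ⟨0, by simp⟩

lemma parentClosed_ancestors (k : ℕ) : ParentClosed (ancestors k) := by
  rintro i ⟨e, he⟩ hi
  obtain ⟨m, rfl⟩ := Nat.not_even_iff_odd.1 hi
  exact ⟨e + 1, by rw [parent_two_mul_add_one, ← he]; ring⟩

lemma parent_mem_ancestors {k : ℕ} (hk : ¬ Even k) : parent k ∈ ancestors k :=
  parentClosed_ancestors k k (self_mem_ancestors k) hk

lemma ancestors_subset_Iio (k : ℕ) : ancestors k ⊆ Iio (k + 1) := by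
  rintro i ⟨e, he⟩
  have := Nat.one_le_two_pow (n := e)
  simp only [mem_Iio]; nlinarith

lemma exists_of_not_disjoint_ancestors {k l : ℕ} (h : ¬ Disjoint (ancestors k) (ancestors l)) :
    ∃ e, k + 1 = (l + 1) * 2 ^ e ∨ l + 1 = (k + 1) * 2 ^ e := by
  obtain ⟨i, ⟨a, ha⟩, ⟨b, hb⟩⟩ := Set.not_disjoint_iff.1 h
  rcases le_total a b with hab | hab
  · refine ⟨b - a, Or.inr ?_⟩
    rw [← hb, ← ha, mul_assoc, ← pow_add, Nat.add_sub_cancel' hab]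
  · refine ⟨a - b, Or.inl ?_⟩
    rw [← hb, ← ha, mul_assoc, ← pow_add, Nat.add_sub_cancel' hab]

open Classical in
lemma card_filter_succ_eq_succ_mul_two_pow_le (n : ℕ) :
    ((Finset.range n ×ˢ Finset.range n).filter
      fun kl : ℕ × ℕ => ∃ e, kl.1 + 1 = (kl.2 + 1) * 2 ^ e).card ≤ 2 * n := by
  let F (e : ℕ) := (Finset.range n).filter fun l => (l + 1) * 2 ^ e ≤ n
  have hF (e : ℕ) : (F e).card ≤ n / 2 ^ e := by
    refine (Finset.card_le_card fun l hl => ?_).trans (Finset.card_range _).le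
    simp only [F, Finset.mem_filter] at hl
    exact Finset.mem_range.2 (Nat.lt_of_succ_le ((Nat.le_div_iff_mul_le (by positivity)).2 hl.2))
  calc _ ≤ ((Finset.range n).biUnion fun e =>
        (F e).image fun l => ((l + 1) * 2 ^ e - 1, l)).card := by
        refine Finset.card_le_card fun ⟨k, l⟩ hkl => ?_
        simp only [Finset.mem_filter, Finset.mem_product, Finset.mem_range] at hkl
        obtain ⟨⟨hk, hl⟩, e, he⟩ := hkl
        have h2e : 2 ^ e ≤ n := by nlinarith [Nat.one_le_two_pow (n := e)]
        simp only [Finset.mem_biUnion, Finset.mem_range, Finset.mem_image, F, Finset.mem_filter]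
        exact ⟨e, (Nat.lt_two_pow_self).trans_le h2e, l, ⟨hl, by omega⟩, by simp; omega⟩
    _ ≤ ∑ e ∈ Finset.range n, n / 2 ^ e :=
        Finset.card_biUnion_le.trans
          (Finset.sum_le_sum fun e _ => Finset.card_image_le.trans (hF e))
    _ ≤ 2 * n := by simpa [mul_comm] using Nat.geom_sum_le le_rfl n n

open Classical in
lemma card_not_disjoint_ancestors_le (n : ℕ) :
    ((Finset.range n ×ˢ Finset.range n).filter
      fun kl => ¬ Disjoint (ancestors kl.1) (ancestors kl.2)).card ≤ 4 * n := by
  set R := (Finset.range n ×ˢ Finset.range n).filter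
    fun kl : ℕ × ℕ => ∃ e, kl.1 + 1 = (kl.2 + 1) * 2 ^ e
  calc _ ≤ (R ∪ R.image Prod.swap).card := by
        refine Finset.card_le_card fun ⟨k, l⟩ hkl => ?_
        simp only [Finset.mem_filter, Finset.mem_product] at hkl
        obtain ⟨e, he | he⟩ := exists_of_not_disjoint_ancestors hkl.2
        · exact Finset.mem_union_left _ (Finset.mem_filter.2 ⟨Finset.mem_product.2 hkl.1, e, he⟩)
        · refine Finset.mem_union_right _ (Finset.mem_image.2 ⟨(l, k), ?_, rfl⟩)
          exact Finset.mem_filter.2 ⟨Finset.mem_product.2 hkl.1.symm, e, he⟩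
    _ ≤ R.card + R.card := (Finset.card_union_le _ _).trans (add_le_add le_rfl Finset.card_image_le)
    _ ≤ 4 * n := by
        have : R.card ≤ 2 * n := by convert card_filter_succ_eq_succ_mul_two_pow_le n
        omega

end Ancestors

section LawOfLargeNumbers

variable {p q : ℝ}

theorem ae_tendsto_sum_div {μ : Measure (ℕ → Fin 2)} (hμ : HasCylMass p q μ)
    (hp : p ∈ Icc 0 1) (hq : q ∈ Icc 0 1) {T : ℕ → (ℕ → Fin 2) → ℝ} {G Λ : ℝ}
    (hG : ∀ k ω, |T k ω| ≤ G) (hT : ∀ k, DependsOn (T k) (ancestors k))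
    (hmean : Tendsto (fun n => (∑ k ∈ Finset.range n, cylExpect p q (k + 1) (T k)) / n) atTop
      (𝓝 Λ)) :
    ∀ᵐ ω ∂μ, Tendsto (fun n => (∑ k ∈ Finset.range n, T k ω) / n) atTop (𝓝 Λ) := by
  classical
  refine ae_tendsto_div_of_tail_le (G := G) (C := 16 * G ^ 2) (fun n ω => ?_) (fun n => ?_)
    hmean fun n a ha => ?_
  · simpa [Finset.sum_range_succ] using hG n ω
  · simpa [Finset.sum_range_succ] using abs_cylExpect_le hp hq (n + 1) (hG n)
  have hAN : ∀ k ∈ Finset.range n, ancestors k ⊆ Iio (n + 1) := fun k hk =>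
    (ancestors_subset_Iio k).trans (Iio_subset_Iio (by simpa using (Finset.mem_range.1 hk).le))
  have hmean_n : cylExpect p q (n + 1) (∑ k ∈ Finset.range n, T k) =
      ∑ k ∈ Finset.range n, cylExpect p q (k + 1) (T k) := by
    rw [map_sum]
    exact Finset.sum_congr rfl fun k hk => cylExpect_of_dependsOn
      ((hT k).mono (ancestors_subset_Iio k)) (by simpa using (Finset.mem_range.1 hk).le)
  have hV : DependsOn (∑ k ∈ Finset.range n, T k) (Iio (n + 1)) := fun ω ω' h => by
    simp only [Finset.sum_apply]
    exact Finset.sum_congr rfl fun k hk => hT k fun i hi => h i (hAN k hk hi)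
  have hvar := cylExpect_sq_sum_sub_le hp hq (Finset.range n) hG (fun k => parentClosed_ancestors k)
    hAN hT
  have hcard := card_not_disjoint_ancestors_le n
  have hcheb := measure_le_abs_sub_cylExpect_le hμ hp hq (Nat.le_add_left 1 n) hV ha
  simp only [hmean_n, Finset.sum_apply] at hcheb hvar
  refine hcheb.trans (ENNReal.ofReal_le_ofReal ?_)
  gcongr
  calc _ ≤ 4 * G ^ 2 * (((Finset.range n ×ˢ Finset.range n).filter
        fun kl => ¬ Disjoint (ancestors kl.1) (ancestors kl.2)).card : ℝ) := hvar
    _ ≤ 4 * G ^ 2 * (4 * n : ℕ) := by gcongr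
    _ = 16 * G ^ 2 * n := by push_cast; ring

end LawOfLargeNumbers

section Means

variable {p q : ℝ}

def meanOne (p q : ℝ) (k : ℕ) : ℝ := cylExpect p q (k + 1) (fun ω => if ω k = 1 then 1 else 0)

lemma cylExpect_comp_condParam (φ : ℝ → ℝ) (k : ℕ) :
    cylExpect p q (k + 1) (φ ∘ condParam p q k) =
      if Even k then φ p else φ p + (φ q - φ p) * meanOne p q (parent k) := by
  split_ifs with hk
  · simp [Function.comp_def, condParam, hk]
  have hφ : φ ∘ condParam p q k =
      (fun _ => φ p) + (φ q - φ p) • fun ω => if ω (parent k) = 1 then 1 else 0 := by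
    ext ω; by_cases h : ω (parent k) = 1 <;> simp [condParam, hk, h]
  have hdep : DependsOn (fun ω : ℕ → Fin 2 => if ω (parent k) = 1 then (1 : ℝ) else 0)
      (Iio (parent k + 1)) := fun ω ω' h => by dsimp only; rw [h _ (Nat.lt_succ_self _)]
  rw [hφ, map_add, map_smul, cylExpect_const, smul_eq_mul, meanOne,
    cylExpect_of_dependsOn hdep (by have := parent_lt hk; omega)]

lemma meanOne_eq_cylExpect_condParam (k : ℕ) :
    meanOne p q k = cylExpect p q (k + 1) (id ∘ condParam p q k) := by
  have hdep : DependsOn (fun ω : ℕ → Fin 2 => if ω k = 1 then (1 : ℝ) else 0) (Iio (k + 1)) :=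
    fun ω ω' h => by dsimp only; rw [h _ (Nat.lt_succ_self _)]
  have hint : integrateCoord p q k (fun ω => if ω k = 1 then 1 else 0) = id ∘ condParam p q k := by
    ext ω; simp [integrateCoord_apply, bernoulliWeight]
  rw [meanOne, ← hint, cylExpect_integrateCoord hdep (Nat.lt_succ_self k)]

lemma sum_cylExpect_comp_condParam (φ : ℝ → ℝ) (n : ℕ) :
    ∑ k ∈ Finset.range n, cylExpect p q (k + 1) (φ ∘ condParam p q k) =
      n * φ p + (φ q - φ p) * ∑ i ∈ Finset.range (n / 2), meanOne p q i := by
  rw [sum_range_eq_sum_even_add_sum_odd]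
  simp only [cylExpect_comp_condParam, Nat.even_add_one,
    even_two_mul, not_true_eq_false, if_true, if_false, parent_two_mul_add_one,
    Finset.sum_const, Finset.card_range, nsmul_eq_mul, Finset.sum_add_distrib, Finset.mul_sum]
  have : ((n + 1) / 2 : ℕ) + (n / 2 : ℕ) = (n : ℝ) := by norm_cast; omega
  linear_combination φ p * this

lemma abs_sum_meanOne_sub_le (hp : p ∈ Ioo 0 1) (hq : q ∈ Ioo 0 1) (n : ℕ) :
    |∑ i ∈ Finset.range n, meanOne p q i - 2 * p / (2 - (q - p)) * n| ≤
      |2 * p / (2 - (q - p))| / (1 - |q - p|) := by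
  -- `s` solves `s = p + (q - p) s / 2`, the recursion `meanOne (2i+1) = p + (q - p) meanOne i`
  -- averaged over even and odd indices
  set s := 2 * p / (2 - (q - p))
  have ht : |q - p| < 1 := abs_sub_lt_iff.2 ⟨by linarith [hq.2, hp.1], by linarith [hq.1, hp.2]⟩
  have hs : s * (2 - (q - p)) = 2 * p := div_mul_cancel₀ _ (by linarith [le_abs_self (q - p)])
  refine abs_le_of_abs_le_mul_half (D := fun n => ∑ i ∈ Finset.range n, meanOne p q i - s * n)
    (abs_nonneg _) ht (by simp only [Finset.range_zero, Finset.sum_empty, Nat.cast_zero, mul_zero,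
      sub_zero, abs_zero]; have := sub_pos.2 ht; positivity) (fun n _ => ?_) n
  have hrec := sum_cylExpect_comp_condParam (p := p) (q := q) id n
  simp only [← meanOne_eq_cylExpect_condParam, id_eq] at hrec
  have hhalf := abs_natCast_div_two_sub_le n
  calc _ = |(q - p) * (∑ i ∈ Finset.range (n / 2), meanOne p q i - s * (n / 2 : ℕ)) +
        (q - p) * s * (((n / 2 : ℕ) : ℝ) - n / 2)| := by
        rw [hrec]; congr 1; linear_combination (-(n : ℝ) / 2) * hs
    _ ≤ |q - p| * |∑ i ∈ Finset.range (n / 2), meanOne p q i - s * (n / 2 : ℕ)| + |s| := by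
        refine (abs_add_le _ _).trans (add_le_add (abs_mul _ _).le ?_)
        rw [abs_mul, abs_mul]
        calc |q - p| * |s| * _ ≤ 1 * |s| * 1 := by gcongr
          _ = |s| := by ring

lemma tendsto_sum_cylExpect_comp_condParam_div (hp : p ∈ Ioo 0 1) (hq : q ∈ Ioo 0 1)
    (φ : ℝ → ℝ) :
    Tendsto (fun n => (∑ k ∈ Finset.range n, cylExpect p q (k + 1) (φ ∘ condParam p q k)) / n)
      atTop (𝓝 (φ p + (φ q - φ p) * (p / (2 - (q - p))))) := by
  set s := 2 * p / (2 - (q - p))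
  refine tendsto_div_of_abs_sub_mul_le (K := |φ q - φ p| * (|s| / (1 - |q - p|) + |s|)) fun n => ?_
  have hm := abs_sum_meanOne_sub_le hp hq (n / 2)
  have hhalf := abs_natCast_div_two_sub_le n
  calc _ = |(φ q - φ p) * ((∑ i ∈ Finset.range (n / 2), meanOne p q i - s * (n / 2 : ℕ)) +
        s * (((n / 2 : ℕ) : ℝ) - n / 2))| := by
        rw [sum_cylExpect_comp_condParam]; congr 1; simp only [s]; ring
    _ ≤ |φ q - φ p| * (|s| / (1 - |q - p|) + |s|) := by
        rw [abs_mul]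
        gcongr
        refine (abs_add_le _ _).trans (add_le_add hm ?_)
        rw [abs_mul]
        exact mul_le_of_le_one_right (abs_nonneg _) hhalf

end Means

section Frequencies

variable {p q : ℝ}

lemma abs_log_bernoulliWeight_le (r : ℝ) (x : Fin 2) :
    |Real.log (bernoulliWeight r x)| ≤ |Real.log r| + |Real.log (1 - r)| := by
  unfold bernoulliWeight; split_ifs <;> simp

lemma dependsOn_condProb (k : ℕ) : DependsOn (condProb p q k) (ancestors k) := fun ω ω' h => by
  rw [condProb, condProb, h k (self_mem_ancestors k),
    dependsOn_condParam (fun hk => parent_mem_ancestors hk) h]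

lemma condProb_pos (hp : p ∈ Ioo 0 1) (hq : q ∈ Ioo 0 1) (k : ℕ) (ω : ℕ → Fin 2) :
    0 < condProb p q k ω :=
  bernoulliWeight_pos (condParam_mem hp hq k ω) _

def lamSum (lam0 lam1 : ℝ) (ω : ℕ → Fin 2) (n : ℕ) : ℝ :=
  ∑ k ∈ Finset.range n, if ω k = 1 then lam1 else lam0

theorem ae_tendsto_lamSum_div {μ : Measure (ℕ → Fin 2)} (hμ : HasCylMass p q μ)
    (hp : p ∈ Ioo 0 1) (hq : q ∈ Ioo 0 1) (lam0 lam1 : ℝ) :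
    ∀ᵐ ω ∂μ, Tendsto (fun n => lamSum lam0 lam1 ω n / n)
      atTop (𝓝 (lam0 + (lam1 - lam0) * (p + (q - p) * (p / (2 - (q - p)))))) := by
  refine ae_tendsto_sum_div hμ (Ioo_subset_Icc_self hp) (Ioo_subset_Icc_self hq)
    (T := fun k ω => if ω k = 1 then lam1 else lam0) (G := |lam0| + |lam1|)
    (fun k ω => by split_ifs <;> simp) (fun k ω ω' h => by
      simp only [h k (self_mem_ancestors k)]) ?_
  have hmean (k : ℕ) : cylExpect p q (k + 1) (fun ω => if ω k = 1 then lam1 else lam0) =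
      lam0 + (lam1 - lam0) * meanOne p q k := by
    have : (fun ω : ℕ → Fin 2 => if ω k = 1 then lam1 else lam0) =
        (fun _ => lam0) + (lam1 - lam0) • fun ω => if ω k = 1 then 1 else 0 := by
      ext ω; by_cases h : ω k = 1 <;> simp [h]
    rw [this, map_add, map_smul, cylExpect_const, smul_eq_mul, meanOne]
  have hsum := (tendsto_sum_cylExpect_comp_condParam_div hp hq id).const_mul (lam1 - lam0)
  simp only [← meanOne_eq_cylExpect_condParam, id_eq] at hsum
  refine (hsum.const_add lam0).congr' ?_
  filter_upwards [eventually_gt_atTop 0] with n hn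
  rw [Finset.sum_congr rfl fun k _ => hmean k, Finset.sum_add_distrib, ← Finset.mul_sum,
    Finset.sum_const, Finset.card_range, nsmul_eq_mul]
  field_simp

theorem ae_tendsto_log_cylMass_div {μ : Measure (ℕ → Fin 2)} (hμ : HasCylMass p q μ)
    (hp : p ∈ Ioo 0 1) (hq : q ∈ Ioo 0 1) :
    ∀ᵐ ω ∂μ, Tendsto (fun n => Real.log (cylMass p q ω n) / n)
      atTop (𝓝 (-Hent p + (-Hent q - -Hent p) * (p / (2 - (q - p))))) := by
  have hint (k : ℕ) : integrateCoord p q k (fun ω => Real.log (condProb p q k ω)) =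
      (fun r => -Hent r) ∘ condParam p q k := by
    ext ω
    simp only [integrateCoord_apply, condProb_update, sum_bernoulliWeight_mul_log,
      Function.comp_apply]
  have hmean := tendsto_sum_cylExpect_comp_condParam_div hp hq fun r => -Hent r
  simp only [← hint] at hmean
  have hmean' : Tendsto (fun n => (∑ k ∈ Finset.range n,
      cylExpect p q (k + 1) (fun ω => Real.log (condProb p q k ω))) / n) atTop
      (𝓝 (-Hent p + (-Hent q - -Hent p) * (p / (2 - (q - p))))) := by
    refine hmean.congr fun n => ?_
    congr 1
    refine Finset.sum_congr rfl fun k _ => cylExpect_integrateCoord (fun ω ω' h => ?_)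
      (Nat.lt_succ_self k)
    simp only [dependsOn_condProb k fun i hi => h i (ancestors_subset_Iio k hi)]
  have hG (k : ℕ) (ω : ℕ → Fin 2) : |Real.log (condProb p q k ω)| ≤
      (|Real.log p| + |Real.log (1 - p)|) + (|Real.log q| + |Real.log (1 - q)|) := by
    refine (abs_log_bernoulliWeight_le _ _).trans ?_
    rcases condParam_eq_or k ω with h | h <;> rw [h]
    · exact le_add_of_nonneg_right (by positivity)
    · exact le_add_of_nonneg_left (by positivity)
  filter_upwards [ae_tendsto_sum_div hμ (Ioo_subset_Icc_self hp) (Ioo_subset_Icc_self hq) hG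
    (fun k ω ω' h => by simp only [dependsOn_condProb k h]) hmean'] with ω hω
  refine hω.congr fun n => ?_
  rw [cylMass_eq_prod, Real.log_prod fun j _ => (condProb_pos hp hq j ω).ne']

end Frequencies

section Coding

variable {lam0 lam1 : ℝ}

lemma fdig_sub (i : Fin 2) (x y : ℝ) :
    fdig lam0 lam1 i x - fdig lam0 lam1 i y =
      Real.exp (-(if i = 1 then lam1 else lam0)) * (x - y) := by
  unfold fdig; split_ifs <;> ring

lemma prefixIter_succ_apply (ω : ℕ → Fin 2) (n : ℕ) (x : ℝ) :
    prefixIter lam0 lam1 ω (n + 1) x = prefixIter lam0 lam1 ω n (fdig lam0 lam1 (ω n) x) := rfl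

lemma prefixIter_sub (ω : ℕ → Fin 2) (n : ℕ) (x y : ℝ) :
    prefixIter lam0 lam1 ω n x - prefixIter lam0 lam1 ω n y =
      Real.exp (-lamSum lam0 lam1 ω n) * (x - y) := by
  induction n generalizing x y with
  | zero => simp [prefixIter, lamSum]
  | succ n ih =>
    rw [prefixIter_succ_apply, prefixIter_succ_apply, ih, fdig_sub, lamSum, lamSum,
      Finset.sum_range_succ, neg_add, Real.exp_add]
    ring

lemma strictMono_prefixIter (ω : ℕ → Fin 2) (n : ℕ) : StrictMono (prefixIter lam0 lam1 ω n) :=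
  fun x y hxy => sub_pos.1 <| by
    rw [prefixIter_sub]; exact mul_pos (Real.exp_pos _) (sub_pos.2 hxy)

lemma prefixIter_congr {ω τ : ℕ → Fin 2} {n : ℕ} (h : ∀ k < n, ω k = τ k) :
    prefixIter lam0 lam1 ω n = prefixIter lam0 lam1 τ n := by
  induction n with
  | zero => rfl
  | succ n ih =>
    ext x
    rw [prefixIter_succ_apply, prefixIter_succ_apply, h n n.lt_succ_self,
      ih fun k hk => h k (hk.trans n.lt_succ_self)]

lemma prefixIter_add (ω : ℕ → Fin 2) (n m : ℕ) (x : ℝ) :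
    prefixIter lam0 lam1 ω (n + m) x =
      prefixIter lam0 lam1 ω n (prefixIter lam0 lam1 (fun k => ω (n + k)) m x) := by
  induction m generalizing x with
  | zero => rfl
  | succ m ih => exact ih _

lemma continuous_prefixIter (ω : ℕ → Fin 2) (n : ℕ) : Continuous (prefixIter lam0 lam1 ω n) := by
  induction n with
  | zero => exact continuous_id
  | succ n ih =>
    refine ih.comp ?_
    unfold fdig; split_ifs <;> fun_prop

lemma fdig_mem_Icc (h0 : 0 < lam0) (h1 : 0 < lam1) (i : Fin 2) {x : ℝ} (hx : x ∈ Icc 0 1) :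
    fdig lam0 lam1 i x ∈ Icc 0 1 := by
  have e0 : Real.exp (-lam0) < 1 := Real.exp_lt_one_iff.2 (by linarith)
  have e1 : Real.exp (-lam1) < 1 := Real.exp_lt_one_iff.2 (by linarith)
  have := Real.exp_pos (-lam0); have := Real.exp_pos (-lam1)
  unfold fdig; split_ifs <;> constructor <;> nlinarith [hx.1, hx.2]

lemma prefixIter_mem_Icc (h0 : 0 < lam0) (h1 : 0 < lam1) (ω : ℕ → Fin 2) (n : ℕ) {x : ℝ}
    (hx : x ∈ Icc 0 1) : prefixIter lam0 lam1 ω n x ∈ Icc 0 1 := by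
  induction n generalizing x with
  | zero => exact hx
  | succ n ih => exact ih (fdig_mem_Icc h0 h1 _ hx)

lemma monotone_prefixIter_zero (h0 : 0 < lam0) (h1 : 0 < lam1) (ω : ℕ → Fin 2) :
    Monotone fun n => prefixIter lam0 lam1 ω n 0 :=
  monotone_nat_of_le_succ fun n => (strictMono_prefixIter ω n).monotone
    (fdig_mem_Icc h0 h1 (ω n) (left_mem_Icc.2 zero_le_one)).1

lemma antitone_prefixIter_one (h0 : 0 < lam0) (h1 : 0 < lam1) (ω : ℕ → Fin 2) :
    Antitone fun n => prefixIter lam0 lam1 ω n 1 :=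
  antitone_nat_of_succ_le fun n => (strictMono_prefixIter ω n).monotone
    (fdig_mem_Icc h0 h1 (ω n) (right_mem_Icc.2 zero_le_one)).2

lemma tendsto_prefixIter_piMap (h0 : 0 < lam0) (h1 : 0 < lam1) (ω : ℕ → Fin 2) :
    Tendsto (fun n => prefixIter lam0 lam1 ω n 0) atTop (𝓝 (piMap lam0 lam1 ω)) := by
  have h := tendsto_atTop_ciSup (monotone_prefixIter_zero h0 h1 ω)
    ⟨1, by rintro _ ⟨n, rfl⟩; exact (prefixIter_mem_Icc h0 h1 ω n (left_mem_Icc.2 zero_le_one)).2⟩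
  rwa [piMap, h.limUnder_eq]

lemma piMap_mem_Icc_zero_one (h0 : 0 < lam0) (h1 : 0 < lam1) (ω : ℕ → Fin 2) :
    piMap lam0 lam1 ω ∈ Icc 0 1 :=
  isClosed_Icc.mem_of_tendsto (tendsto_prefixIter_piMap h0 h1 ω) <| .of_forall fun n =>
    prefixIter_mem_Icc h0 h1 ω n (left_mem_Icc.2 zero_le_one)

lemma piMap_eq_prefixIter (h0 : 0 < lam0) (h1 : 0 < lam1) (ω : ℕ → Fin 2) (n : ℕ) :
    piMap lam0 lam1 ω =
      prefixIter lam0 lam1 ω n (piMap lam0 lam1 fun k => ω (n + k)) := by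
  refine tendsto_nhds_unique ((tendsto_add_atTop_iff_nat n).2 (tendsto_prefixIter_piMap h0 h1 ω))
    ?_
  simp only [add_comm _ n, prefixIter_add]
  exact ((continuous_prefixIter ω n).tendsto _).comp (tendsto_prefixIter_piMap h0 h1 _)

lemma piMap_mem_Icc (h0 : 0 < lam0) (h1 : 0 < lam1) (ω : ℕ → Fin 2) (n : ℕ) :
    piMap lam0 lam1 ω ∈ Icc (prefixIter lam0 lam1 ω n 0) (prefixIter lam0 lam1 ω n 1) := by
  rw [piMap_eq_prefixIter h0 h1 ω n]
  have := piMap_mem_Icc_zero_one h0 h1 fun k => ω (n + k)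
  exact ⟨(strictMono_prefixIter ω n).monotone this.1, (strictMono_prefixIter ω n).monotone this.2⟩

lemma piMap_const_zero (h0 : 0 < lam0) (h1 : 0 < lam1) : piMap lam0 lam1 (fun _ => 0) = 0 := by
  have h := piMap_eq_prefixIter h0 h1 (fun _ => 0) 1
  have e0 : Real.exp (-lam0) < 1 := Real.exp_lt_one_iff.2 (by linarith)
  simp only [prefixIter, fdig, zero_ne_one, if_false] at h
  nlinarith

lemma piMap_const_one (h0 : 0 < lam0) (h1 : 0 < lam1) : piMap lam0 lam1 (fun _ => 1) = 1 := by
  have h := piMap_eq_prefixIter h0 h1 (fun _ => 1) 1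
  have e1 : Real.exp (-lam1) < 1 := Real.exp_lt_one_iff.2 (by linarith)
  simp only [prefixIter, fdig, if_true] at h
  nlinarith

lemma piMap_piecewise (h0 : 0 < lam0) (h1 : 0 < lam1) (ω : ℕ → Fin 2) (n : ℕ) (c : Fin 2) :
    piMap lam0 lam1 (fun k => if k < n then ω k else c) =
      prefixIter lam0 lam1 ω n (piMap lam0 lam1 fun _ => c) := by
  rw [piMap_eq_prefixIter h0 h1 _ n, prefixIter_congr fun k hk => if_pos hk]
  congr 2; ext k; simp

lemma diam_image_cyl (h0 : 0 < lam0) (h1 : 0 < lam1) (ω : ℕ → Fin 2) (n : ℕ) :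
    Metric.diam (piMap lam0 lam1 '' cyl ω n) = Real.exp (-lamSum lam0 lam1 ω n) := by
  have hsub : piMap lam0 lam1 '' cyl ω n ⊆
      Icc (prefixIter lam0 lam1 ω n 0) (prefixIter lam0 lam1 ω n 1) := by
    rintro _ ⟨τ, hτ, rfl⟩
    simpa [prefixIter_congr hτ] using piMap_mem_Icc h0 h1 τ n
  have hmem (c : Fin 2) : prefixIter lam0 lam1 ω n (piMap lam0 lam1 fun _ => c) ∈
      piMap lam0 lam1 '' cyl ω n :=
    ⟨_, fun k hk => if_pos hk, piMap_piecewise h0 h1 ω n c⟩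
  have hlen : prefixIter lam0 lam1 ω n 1 - prefixIter lam0 lam1 ω n 0 =
      Real.exp (-lamSum lam0 lam1 ω n) := by rw [prefixIter_sub]; ring
  refine le_antisymm ?_ ?_
  · rw [← hlen, ← Real.diam_Icc (by linarith [Real.exp_pos (-lamSum lam0 lam1 ω n)])]
    exact Metric.diam_mono hsub (Metric.isBounded_Icc _ _)
  · have h := Metric.dist_le_diam_of_mem (Metric.isBounded_Icc _ _ |>.subset hsub)
      (hmem 1) (hmem 0)
    rwa [piMap_const_one h0 h1, piMap_const_zero h0 h1, Real.dist_eq, hlen,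
      abs_of_pos (Real.exp_pos _)] at h

end Coding

section ImageMeasure

variable {lam0 lam1 p q : ℝ}

lemma prefixIter_succ_one_le_prefixIter_succ_zero
    (hopen : Real.exp (-lam0) + Real.exp (-lam1) ≤ 1) {σ τ : ℕ → Fin 2} {d : ℕ}
    (h : ∀ k < d, σ k = τ k) (hσ : σ d = 0) (hτ : τ d = 1) :
    prefixIter lam0 lam1 σ (d + 1) 1 ≤ prefixIter lam0 lam1 τ (d + 1) 0 := by
  rw [prefixIter_succ_apply, prefixIter_succ_apply, prefixIter_congr h, hσ, hτ]
  refine (strictMono_prefixIter τ d).monotone ?_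
  simp only [fdig, Fin.zero_eq_one_iff, if_true]
  norm_num; linarith

lemma piMap_lt_prefixIter_one (h0 : 0 < lam0) (h1 : 0 < lam1) {τ : ℕ → Fin 2} {n m : ℕ}
    (hnm : n ≤ m) (hτ : τ m = 0) : piMap lam0 lam1 τ < prefixIter lam0 lam1 τ n 1 := by
  calc piMap lam0 lam1 τ ≤ prefixIter lam0 lam1 τ (m + 1) 1 := (piMap_mem_Icc h0 h1 τ _).2
    _ < prefixIter lam0 lam1 τ m 1 := by
        rw [prefixIter_succ_apply, hτ]
        refine strictMono_prefixIter τ m ?_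
        simpa [fdig] using Real.exp_lt_one_iff.2 (neg_lt_zero.2 h0)
    _ ≤ prefixIter lam0 lam1 τ n 1 := antitone_prefixIter_one h0 h1 τ hnm

lemma prefixIter_zero_lt_piMap (h0 : 0 < lam0) (h1 : 0 < lam1) {τ : ℕ → Fin 2} {n m : ℕ}
    (hnm : n ≤ m) (hτ : τ m = 1) : prefixIter lam0 lam1 τ n 0 < piMap lam0 lam1 τ := by
  calc prefixIter lam0 lam1 τ n 0 ≤ prefixIter lam0 lam1 τ m 0 :=
        monotone_prefixIter_zero h0 h1 τ hnm
    _ < prefixIter lam0 lam1 τ (m + 1) 0 := by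
        rw [prefixIter_succ_apply, hτ]
        refine strictMono_prefixIter τ m ?_
        simpa [fdig] using Real.exp_lt_one_iff.2 (neg_lt_zero.2 h1)
    _ ≤ piMap lam0 lam1 τ := (piMap_mem_Icc h0 h1 τ _).1

def eventuallyConst : Set (ℕ → Fin 2) := {τ | ∃ N c, ∀ m, N ≤ m → τ m = c}

lemma countable_eventuallyConst : eventuallyConst.Countable := by
  have : eventuallyConst = ⋃ (N : ℕ) (c : Fin 2), {τ : ℕ → Fin 2 | ∀ m, N ≤ m → τ m = c} := by
    ext τ; simp [eventuallyConst]
  rw [this]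
  refine countable_iUnion fun N => countable_iUnion fun c => Set.Finite.countable ?_
  refine (Set.finite_range fun w : Fin N → Fin 2 => fun m => if h : m < N then w ⟨m, h⟩ else c)
    |>.subset fun τ hτ => ⟨fun i => τ i, funext fun m => ?_⟩
  by_cases hm : m < N
  · simp [hm]
  · simp [hm, hτ m (not_lt.1 hm)]

/-- Under the open set condition `π` is monotone for the lexicographic order, and a sequence
outside `cyl ω n` can only reach an endpoint of the interval spanned by `π(cyl ω n)` if it ends
in `0^∞` or `1^∞`. -/
lemma preimage_Icc_subset (h0 : 0 < lam0) (h1 : 0 < lam1)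
    (hopen : Real.exp (-lam0) + Real.exp (-lam1) ≤ 1) (ω : ℕ → Fin 2) (n : ℕ) :
    piMap lam0 lam1 ⁻¹' Icc (prefixIter lam0 lam1 ω n 0) (prefixIter lam0 lam1 ω n 1) ⊆
      cyl ω n ∪ eventuallyConst := by
  classical
  intro τ ⟨hlo, hhi⟩
  by_contra hτ
  simp only [mem_union, not_or] at hτ
  obtain ⟨hcyl, hconst⟩ := hτ
  have hex : ∃ k, k < n ∧ τ k ≠ ω k := by
    by_contra! h; exact hcyl fun k hk => h k hk
  set d := Nat.find hex
  obtain ⟨hdn, hd⟩ := Nat.find_spec hex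
  have hagree : ∀ k < d, τ k = ω k := fun k hk => by
    by_contra h; exact Nat.find_min hex hk ⟨hk.trans hdn, h⟩
  have hfin : ∀ a b : Fin 2, a ≠ b → a = 0 ∧ b = 1 ∨ a = 1 ∧ b = 0 := by decide
  have hne0 : ∀ a : Fin 2, a ≠ 0 → a = 1 := by decide
  have hne1 : ∀ a : Fin 2, a ≠ 1 → a = 0 := by decide
  rcases hfin _ _ hd with ⟨hτd, hωd⟩ | ⟨hτd, hωd⟩
  · obtain ⟨m, hm, hτm⟩ : ∃ m, d + 1 ≤ m ∧ τ m = 0 := by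
      by_contra! h
      exact hconst ⟨d + 1, 1, fun m hm => hne0 _ (h m hm)⟩
    have := piMap_lt_prefixIter_one h0 h1 hm hτm
    have := prefixIter_succ_one_le_prefixIter_succ_zero hopen hagree hτd hωd
    have := monotone_prefixIter_zero h0 h1 ω (show d + 1 ≤ n by omega)
    simp only at this
    linarith
  · obtain ⟨m, hm, hτm⟩ : ∃ m, d + 1 ≤ m ∧ τ m = 1 := by
      by_contra! h
      exact hconst ⟨d + 1, 0, fun m hm => hne1 _ (h m hm)⟩
    have := prefixIter_zero_lt_piMap h0 h1 hm hτm
    have := prefixIter_succ_one_le_prefixIter_succ_zero hopen (fun k hk => (hagree k hk).symm)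
      hωd hτd
    have := antitone_prefixIter_one h0 h1 ω (show d + 1 ≤ n by omega)
    simp only at this
    linarith

lemma continuous_piMap (h0 : 0 < lam0) (h1 : 0 < lam1) : Continuous (piMap lam0 lam1) := by
  refine continuous_iff_continuousAt.2 fun σ => Metric.tendsto_nhds.2 fun ε hε => ?_
  have hc : Real.exp (-min lam0 lam1) < 1 := Real.exp_lt_one_iff.2 (by simp [h0, h1])
  obtain ⟨n, hn⟩ := exists_pow_lt_of_lt_one hε hc
  filter_upwards [(PiNat.isOpen_cylinder (E := fun _ => Fin 2) σ n).mem_nhds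
    (PiNat.self_mem_cylinder σ n)] with τ hτ
  have hτI := piMap_mem_Icc h0 h1 τ n
  have hσI := piMap_mem_Icc h0 h1 σ n
  rw [prefixIter_congr hτ] at hτI
  have hlen := prefixIter_sub (lam0 := lam0) (lam1 := lam1) σ n 1 0
  have hsum : n * min lam0 lam1 ≤ lamSum lam0 lam1 σ n := by
    simpa [lamSum] using Finset.card_nsmul_le_sum (Finset.range n)
      (fun k => if σ k = 1 then lam1 else lam0) (min lam0 lam1) fun k _ => by split_ifs <;> simp
  have hexp : Real.exp (-lamSum lam0 lam1 σ n) ≤ Real.exp (-min lam0 lam1) ^ n := by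
    rw [← Real.exp_nat_mul]; exact Real.exp_le_exp.2 (by linarith)
  rw [Real.dist_eq, abs_lt]
  constructor <;> nlinarith [hτI.1, hτI.2, hσI.1, hσI.2]

lemma nullSingletonClass_of_hasCylMass {μ : Measure (ℕ → Fin 2)} (hμ : HasCylMass p q μ)
    (hp : p ∈ Ioo 0 1) (hq : q ∈ Ioo 0 1) : NullSingletonClass μ := by
  refine ⟨fun σ => le_antisymm ?_ zero_le⟩
  set c := max (max p (1 - p)) (max q (1 - q))
  have hc : c < 1 := max_lt (max_lt hp.2 (by linarith [hp.1])) (max_lt hq.2 (by linarith [hq.1]))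
  have hmax (j : ℕ) : max (condParam p q j σ) (1 - condParam p q j σ) ≤ c := by
    rcases condParam_eq_or j σ with h | h <;> rw [h]
    · exact le_max_left _ _
    · exact le_max_right _ _
  have hbound (n : ℕ) (hn : 1 ≤ n) : μ {σ} ≤ ENNReal.ofReal (c ^ n) := by
    refine (measure_mono (singleton_subset_iff.2 (PiNat.self_mem_cylinder σ n))).trans
      ((hμ σ n hn).trans_le (ENNReal.ofReal_le_ofReal ?_))
    rw [cylMass_eq_prod]
    calc ∏ j ∈ Finset.range n, condProb p q j σ ≤ ∏ _j ∈ Finset.range n, c :=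
          Finset.prod_le_prod (fun j _ => (condProb_pos hp hq j σ).le) fun j _ =>
            (bernoulliWeight_le_max _ _).trans (hmax j)
      _ = c ^ n := by simp
  refine ge_of_tendsto ?_ (eventually_atTop.2 ⟨1, hbound⟩)
  have hc0 : 0 ≤ c := hp.1.le.trans ((le_max_left _ _).trans (le_max_left _ _))
  simpa using ENNReal.tendsto_ofReal (tendsto_pow_atTop_nhds_zero_of_lt_one hc0 hc)

lemma map_piMap_image_cyl {μ : Measure (ℕ → Fin 2)} (hμ : HasCylMass p q μ) (hp : p ∈ Ioo 0 1)
    (hq : q ∈ Ioo 0 1) (h0 : 0 < lam0) (h1 : 0 < lam1)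
    (hopen : Real.exp (-lam0) + Real.exp (-lam1) ≤ 1) (ω : ℕ → Fin 2) {n : ℕ} (hn : 1 ≤ n) :
    μ.map (piMap lam0 lam1) (piMap lam0 lam1 '' cyl ω n) = ENNReal.ofReal (cylMass p q ω n) := by
  have := nullSingletonClass_of_hasCylMass hμ hp hq
  have hmeas := (continuous_piMap h0 h1).measurable
  rw [← hμ ω n hn]
  refine le_antisymm ?_ (Measure.le_map_apply_image hmeas.aemeasurable _)
  calc μ.map (piMap lam0 lam1) (piMap lam0 lam1 '' cyl ω n)
      ≤ μ.map (piMap lam0 lam1)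
          (Icc (prefixIter lam0 lam1 ω n 0) (prefixIter lam0 lam1 ω n 1)) := by
        refine measure_mono ?_
        rintro _ ⟨τ, hτ, rfl⟩
        simpa [prefixIter_congr hτ] using piMap_mem_Icc h0 h1 τ n
    _ ≤ μ (cyl ω n ∪ eventuallyConst) := by
        rw [Measure.map_apply hmeas measurableSet_Icc]
        exact measure_mono (preimage_Icc_subset h0 h1 hopen ω n)
    _ ≤ μ (cyl ω n) := (measure_union_le _ _).trans <| by
        rw [countable_eventuallyConst.measure_zero μ, add_zero]

end ImageMeasure

theorem stmt8_general (lam0 lam1 : ℝ) (h0 : 0 < lam0) (h1 : 0 < lam1)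
    (hopen : Real.exp (-lam0) + Real.exp (-lam1) ≤ 1)
    (p q : ℝ) (hp : p ∈ Set.Ioo (0 : ℝ) 1) (hq : q ∈ Set.Ioo (0 : ℝ) 1)
    (μ : Measure (ℕ → Fin 2))
    (hcyl : ∀ (ω : ℕ → Fin 2) (n : ℕ), 1 ≤ n →
      μ (cyl ω n) = ENNReal.ofReal (cylMass p q ω n)) :
    ∀ᵐ ω ∂μ, Tendsto (fun n : ℕ =>
        Real.log ((μ.map (piMap lam0 lam1) (piMap lam0 lam1 '' cyl ω n)).toReal) /
          Real.log (Metric.diam (piMap lam0 lam1 '' cyl ω n)))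
      atTop (nhds (((2 - q) * Hent p + p * Hent q) /
        (2 * p * lam1 + (2 - p - q) * lam0))) := by
  have hden : 0 < 2 - (q - p) := by linarith [hp.1, hq.2]
  have hrate : 0 < lam0 + (lam1 - lam0) * (p + (q - p) * (p / (2 - (q - p)))) := by
    rw [show lam0 + (lam1 - lam0) * (p + (q - p) * (p / (2 - (q - p)))) =
        (2 * p * lam1 + (2 - p - q) * lam0) / (2 - (q - p)) by field_simp; ring]
    have : 0 < 2 - p - q := by linarith [hp.2, hq.2]
    exact div_pos (by nlinarith [mul_pos hp.1 h1, mul_pos this h0]) hden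
  filter_upwards [ae_tendsto_log_cylMass_div hcyl hp hq,
    ae_tendsto_lamSum_div hcyl hp hq lam0 lam1] with ω hlog hlam
  have hlim := hlog.div hlam.neg (neg_ne_zero.2 hrate.ne')
  convert hlim.congr' ?_ using 2
  · field_simp
    ring
  filter_upwards [eventually_ge_atTop 1] with n hn
  have hn0 : (n : ℝ) ≠ 0 := by positivity
  rw [map_piMap_image_cyl hcyl hp hq h0 h1 hopen ω hn, diam_image_cyl h0 h1, Real.log_exp,
    ENNReal.toReal_ofReal (cylMass_nonneg (Ioo_subset_Icc_self hp) (Ioo_subset_Icc_self hq) ω n),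
    Pi.div_apply, div_neg, div_neg, div_div_div_cancel_right₀ hn0]

/-- If `μ = μ_{p,q}` with `p, q ∈ (0,1)` and `ν_{p,q} = π_* μ_{p,q}`, then for `μ`-a.e. `ω`,
`log ν_{p,q}(π(C_n(ω))) / log diam π(C_n(ω)) → ((2-q)H(p) + pH(q)) / (2pλ₁ + (2-p-q)λ₀)`. -/
theorem stmt8 (lam0 lam1 : ℝ) (h0 : 0 < lam0) (h1 : 0 < lam1)
    (hopen : Real.exp (-lam0) + Real.exp (-lam1) ≤ 1)
    (p q : ℝ) (hp : p ∈ Set.Ioo (0 : ℝ) 1) (hq : q ∈ Set.Ioo (0 : ℝ) 1)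
    (μ : Measure (ℕ → Fin 2)) (hμ : IsProbabilityMeasure μ)
    (hcyl : ∀ (ω : ℕ → Fin 2) (n : ℕ), 1 ≤ n →
      μ (cyl ω n) = ENNReal.ofReal (cylMass p q ω n)) :
    ∀ᵐ ω ∂μ, Tendsto (fun n : ℕ =>
        Real.log ((μ.map (piMap lam0 lam1) (piMap lam0 lam1 '' cyl ω n)).toReal) /
          Real.log (Metric.diam (piMap lam0 lam1 '' cyl ω n)))
      atTop (nhds (((2 - q) * Hent p + p * Hent q) /
        (2 * p * lam1 + (2 - p - q) * lam0))) :=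
  stmt8_general lam0 lam1 h0 h1 hopen p q hp hq μ hcyl
end

section
/- Let λ_0, λ_1 > 0. The function p ↦ 2H(p)/(2pλ_1 + (2-p)λ_0) attains its maximum over [0,1] at the unique p ∈ (0,1) satisfying p^{2λ_0} = (1-p)^{2λ_1+λ_0}, and at no other point of [0,1]. -/
/-!
Writing `F = 2H/D` with `D(x) = 2xλ₁ + (2-x)λ₀`, a direct computation gives
`F' = 2((2λ₁+λ₀) log(1-x) - 2λ₀ log x) / D²`, so `F'(x) > 0` exactly when
`x^{2λ₀} < (1-x)^{2λ₁+λ₀}`. Since `x ↦ x^{2λ₀} - (1-x)^{2λ₁+λ₀}` is strictly increasing on `[0,1]`,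
from `-1` to `1`, it has a unique zero `p`, and `F` strictly increases on `[0,p]` and strictly
decreases on `[p,1]`.
-/

open Filter Set MeasureTheory
open scoped ENNReal

open Real

lemma StrictMonoOn.lt_of_strictAntiOn {α β : Type*} [LinearOrder α] [Preorder β] {f : α → β}
    {a b c x : α} (hmono : StrictMonoOn f (Icc a c)) (hanti : StrictAntiOn f (Icc c b))
    (hac : a ≤ c) (hcb : c ≤ b) (hx : x ∈ Icc a b) (hxc : x ≠ c) : f x < f c := by
  rcases hxc.lt_or_gt with h | h
  · exact hmono ⟨hx.1, h.le⟩ ⟨hac, le_rfl⟩ h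
  · exact hanti ⟨le_rfl, hcb⟩ ⟨h.le, hx.2⟩ h

lemma rpow_lt_rpow_iff_mul_log_lt {x y a b : ℝ} (hx : 0 < x) (hy : 0 < y) :
    x ^ a < y ^ b ↔ a * log x < b * log y := by
  rw [rpow_def_of_pos hx, rpow_def_of_pos hy, exp_lt_exp, mul_comm a, mul_comm b]

section RpowBalance

variable {a b : ℝ}

lemma strictMonoOn_rpow_sub_one_sub_rpow (ha : 0 < a) (hb : 0 < b) :
    StrictMonoOn (fun x : ℝ => x ^ a - (1 - x) ^ b) (Icc 0 1) := by
  intro x hx y hy hxy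
  have hxy' : x ^ a < y ^ a := rpow_lt_rpow hx.1 hxy ha
  have hyx' : (1 - y) ^ b ≤ (1 - x) ^ b := rpow_le_rpow (by linarith [hy.2]) (by linarith) hb.le
  dsimp only
  linarith

lemma exists_mem_Ioo_rpow_eq_one_sub_rpow (ha : 0 < a) (hb : 0 < b) :
    ∃ p ∈ Ioo (0 : ℝ) 1, p ^ a = (1 - p) ^ b := by
  have hcont : ContinuousOn (fun x : ℝ => x ^ a - (1 - x) ^ b) (Icc 0 1) :=
    ((continuous_rpow_const ha.le).sub
      ((continuous_rpow_const hb.le).comp (continuous_const.sub continuous_id))).continuousOn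
  have hzero : (0 : ℝ) ∈ Icc ((0 : ℝ) ^ a - (1 - 0) ^ b) ((1 : ℝ) ^ a - (1 - 1) ^ b) := by
    simp [zero_rpow ha.ne', zero_rpow hb.ne']
  obtain ⟨p, hp, hp0⟩ := intermediate_value_Icc zero_le_one hcont hzero
  have hp_ne_zero : p ≠ 0 := by
    rintro rfl
    simp [zero_rpow ha.ne'] at hp0
  have hp_ne_one : p ≠ 1 := by
    rintro rfl
    simp [zero_rpow hb.ne'] at hp0
  exact ⟨p, ⟨hp.1.lt_of_ne' hp_ne_zero, hp.2.lt_of_ne hp_ne_one⟩, sub_eq_zero.mp hp0⟩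

variable {p x : ℝ}

lemma rpow_lt_one_sub_rpow_iff (ha : 0 < a) (hb : 0 < b) (hp : p ∈ Icc (0 : ℝ) 1)
    (hpe : p ^ a = (1 - p) ^ b) (hx : x ∈ Icc (0 : ℝ) 1) :
    x ^ a < (1 - x) ^ b ↔ x < p := by
  rw [← (strictMonoOn_rpow_sub_one_sub_rpow ha hb).lt_iff_lt hx hp, hpe, sub_self, sub_neg]

lemma one_sub_rpow_lt_rpow_iff (ha : 0 < a) (hb : 0 < b) (hp : p ∈ Icc (0 : ℝ) 1)
    (hpe : p ^ a = (1 - p) ^ b) (hx : x ∈ Icc (0 : ℝ) 1) :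
    (1 - x) ^ b < x ^ a ↔ p < x := by
  rw [← (strictMonoOn_rpow_sub_one_sub_rpow ha hb).lt_iff_lt hp hx, hpe, sub_self, sub_pos]

end RpowBalance

lemma Hent_eq_negMulLog (x : ℝ) : Hent x = negMulLog x + negMulLog (1 - x) := by
  simp only [Hent, negMulLog]
  ring

lemma continuous_Hent : Continuous Hent := by
  simp only [funext Hent_eq_negMulLog]
  exact continuous_negMulLog.add (continuous_negMulLog.comp (continuous_const.sub continuous_id))

lemma hasDerivAt_Hent {x : ℝ} (hx0 : x ≠ 0) (hx1 : x ≠ 1) :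
    HasDerivAt Hent (log (1 - x) - log x) x := by
  simp only [funext Hent_eq_negMulLog]
  have h := (hasDerivAt_negMulLog hx0).add
    ((hasDerivAt_negMulLog (sub_ne_zero.mpr hx1.symm)).comp x ((hasDerivAt_id x).const_sub 1))
  exact h.congr_deriv (by ring)

noncomputable def entropyRatio (lam0 lam1 x : ℝ) : ℝ :=
  2 * Hent x / (2 * x * lam1 + (2 - x) * lam0)

section EntropyRatio

variable {lam0 lam1 : ℝ}

lemma entropyRatio_denom_pos (h0 : 0 < lam0) (h1 : 0 ≤ lam1) {x : ℝ} (hx : x ∈ Icc (0 : ℝ) 1) :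
    0 < 2 * x * lam1 + (2 - x) * lam0 := by
  nlinarith [hx.1, hx.2]

lemma continuousOn_entropyRatio (h0 : 0 < lam0) (h1 : 0 ≤ lam1) :
    ContinuousOn (entropyRatio lam0 lam1) (Icc 0 1) :=
  ((continuous_const.mul continuous_Hent).continuousOn).div (by fun_prop)
    fun _ hx => (entropyRatio_denom_pos h0 h1 hx).ne'

lemma hasDerivAt_entropyRatio {x : ℝ} (hx0 : x ≠ 0) (hx1 : x ≠ 1)
    (hD : 2 * x * lam1 + (2 - x) * lam0 ≠ 0) :
    HasDerivAt (entropyRatio lam0 lam1)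
      (2 * ((2 * lam1 + lam0) * log (1 - x) - 2 * lam0 * log x) /
        (2 * x * lam1 + (2 - x) * lam0) ^ 2) x := by
  have hDer : HasDerivAt (fun y : ℝ => 2 * y * lam1 + (2 - y) * lam0) (2 * lam1 - lam0) x :=
    ((((hasDerivAt_id x).const_mul 2).mul_const lam1).add
      (((hasDerivAt_id x).const_sub 2).mul_const lam0)).congr_deriv (by ring)
  refine (((hasDerivAt_Hent hx0 hx1).const_mul 2).div hDer hD).congr_deriv ?_
  rw [div_left_inj' (pow_ne_zero 2 hD)]
  simp only [Hent]
  ring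

lemma deriv_entropyRatio (h0 : 0 < lam0) (h1 : 0 ≤ lam1) {y : ℝ} (hy : y ∈ Ioo (0 : ℝ) 1) :
    deriv (entropyRatio lam0 lam1) y =
      2 * ((2 * lam1 + lam0) * log (1 - y) - 2 * lam0 * log y) /
        (2 * y * lam1 + (2 - y) * lam0) ^ 2 :=
  (hasDerivAt_entropyRatio hy.1.ne' hy.2.ne
    (entropyRatio_denom_pos h0 h1 (mem_Icc_of_Ioo hy)).ne').deriv

lemma deriv_entropyRatio_pos_iff (h0 : 0 < lam0) (h1 : 0 ≤ lam1) {y : ℝ}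
    (hy : y ∈ Ioo (0 : ℝ) 1) :
    0 < deriv (entropyRatio lam0 lam1) y ↔ y ^ (2 * lam0) < (1 - y) ^ (2 * lam1 + lam0) := by
  have hD := entropyRatio_denom_pos h0 h1 (mem_Icc_of_Ioo hy)
  rw [deriv_entropyRatio h0 h1 hy, div_pos_iff_of_pos_right (by positivity),
    mul_pos_iff_of_pos_left two_pos, sub_pos,
    rpow_lt_rpow_iff_mul_log_lt hy.1 (sub_pos.mpr hy.2)]

lemma deriv_entropyRatio_neg_iff (h0 : 0 < lam0) (h1 : 0 ≤ lam1) {y : ℝ}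
    (hy : y ∈ Ioo (0 : ℝ) 1) :
    deriv (entropyRatio lam0 lam1) y < 0 ↔ (1 - y) ^ (2 * lam1 + lam0) < y ^ (2 * lam0) := by
  have hD := entropyRatio_denom_pos h0 h1 (mem_Icc_of_Ioo hy)
  rw [deriv_entropyRatio h0 h1 hy, div_lt_iff₀ (by positivity), zero_mul,
    rpow_lt_rpow_iff_mul_log_lt (sub_pos.mpr hy.2) hy.1]
  constructor <;> intro h <;> linarith

lemma entropyRatio_lt_of_rpow_eq (h0 : 0 < lam0) (h1 : 0 ≤ lam1) {p : ℝ}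
    (hp : p ∈ Ioo (0 : ℝ) 1) (hpe : p ^ (2 * lam0) = (1 - p) ^ (2 * lam1 + lam0))
    {x : ℝ} (hx : x ∈ Icc (0 : ℝ) 1) (hxp : x ≠ p) :
    entropyRatio lam0 lam1 x < entropyRatio lam0 lam1 p := by
  have ha : 0 < 2 * lam0 := by positivity
  have hb : 0 < 2 * lam1 + lam0 := by positivity
  have hp' := mem_Icc_of_Ioo hp
  have hmono : StrictMonoOn (entropyRatio lam0 lam1) (Icc 0 p) := by
    refine strictMonoOn_of_deriv_pos (convex_Icc 0 p)
      ((continuousOn_entropyRatio h0 h1).mono (Icc_subset_Icc le_rfl hp.2.le)) fun y hy => ?_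
    rw [interior_Icc] at hy
    have hy' : y ∈ Ioo (0 : ℝ) 1 := ⟨hy.1, hy.2.trans hp.2⟩
    exact (deriv_entropyRatio_pos_iff h0 h1 hy').mpr
      ((rpow_lt_one_sub_rpow_iff ha hb hp' hpe (mem_Icc_of_Ioo hy')).mpr hy.2)
  have hanti : StrictAntiOn (entropyRatio lam0 lam1) (Icc p 1) := by
    refine strictAntiOn_of_deriv_neg (convex_Icc p 1)
      ((continuousOn_entropyRatio h0 h1).mono (Icc_subset_Icc hp.1.le le_rfl)) fun y hy => ?_
    rw [interior_Icc] at hy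
    have hy' : y ∈ Ioo (0 : ℝ) 1 := ⟨hp.1.trans hy.1, hy.2⟩
    exact (deriv_entropyRatio_neg_iff h0 h1 hy').mpr
      ((one_sub_rpow_lt_rpow_iff ha hb hp' hpe (mem_Icc_of_Ioo hy')).mpr hy.1)
  exact hmono.lt_of_strictAntiOn hanti hp.1.le hp.2.le hx hxp

end EntropyRatio

/-- For `λ₀, λ₁ > 0`, the function `p ↦ 2H(p)/(2pλ₁ + (2-p)λ₀)` attains its maximum over
`[0,1]` at the unique `p ∈ (0,1)` with `p^{2λ₀} = (1-p)^{2λ₁+λ₀}`, and at no other point. -/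
theorem stmt10 (lam0 lam1 : ℝ) (h0 : 0 < lam0) (h1 : 0 < lam1) :
    (∃! p : ℝ, p ∈ Set.Ioo (0 : ℝ) 1 ∧
        p ^ (2 * lam0) = (1 - p) ^ (2 * lam1 + lam0)) ∧
    ∀ p : ℝ, p ∈ Set.Ioo (0 : ℝ) 1 → p ^ (2 * lam0) = (1 - p) ^ (2 * lam1 + lam0) →
      (∀ x ∈ Set.Icc (0 : ℝ) 1,
        2 * Hent x / (2 * x * lam1 + (2 - x) * lam0) ≤
          2 * Hent p / (2 * p * lam1 + (2 - p) * lam0)) ∧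
      (∀ x ∈ Set.Icc (0 : ℝ) 1, x ≠ p →
        2 * Hent x / (2 * x * lam1 + (2 - x) * lam0) <
          2 * Hent p / (2 * p * lam1 + (2 - p) * lam0)) := by
  have ha : 0 < 2 * lam0 := by positivity
  have hb : 0 < 2 * lam1 + lam0 := by positivity
  obtain ⟨p, hp, hpe⟩ := exists_mem_Ioo_rpow_eq_one_sub_rpow ha hb
  refine ⟨⟨p, ⟨hp, hpe⟩, fun q ⟨hq, hqe⟩ => ?_⟩, fun p hp hpe => ?_⟩
  · refine (strictMonoOn_rpow_sub_one_sub_rpow ha hb).injOn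
      (mem_Icc_of_Ioo hq) (mem_Icc_of_Ioo hp) ?_
    simp only [hqe, hpe, sub_self]
  · have hlt : ∀ x ∈ Icc (0 : ℝ) 1, x ≠ p → entropyRatio lam0 lam1 x < entropyRatio lam0 lam1 p :=
      fun x hx hxp => entropyRatio_lt_of_rpow_eq h0 h1.le hp hpe hx hxp
    refine ⟨fun x hx => ?_, hlt⟩
    rcases eq_or_ne x p with rfl | hxp
    · exact le_rfl
    · exact (hlt x hx hxp).le
end

section
/- Let λ_0, λ_1 > 0, let (p,q) ∈ (0,1)², set α = 2pq/(2+p-q), and suppose α(λ_1-λ_0)·log(p(1-q)/((1-p)q)) + λ_0·log(p²(1-q)/(1-p)) - 2λ_1·log(1-p) = 0. Then ((2-q)H(p) + pH(q))/(2pλ_1 + (2-p-q)λ_0) = (α·log(p(1-q)/((1-p)q)) - 2log(1-p))/(2λ_0). -/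
open Filter Set MeasureTheory
open scoped ENNReal

/-- If `λ₀, λ₁ > 0`, `(p,q) ∈ (0,1)²`, `α = 2pq/(2+p-q)` and the equation of Lemma 3 holds,
then `((2-q)H(p) + pH(q))/(2pλ₁ + (2-p-q)λ₀) = (α log(p(1-q)/((1-p)q)) - 2 log(1-p))/(2λ₀)`. -/
theorem stmt13 (lam0 lam1 : ℝ) (h0 : 0 < lam0) (h1 : 0 < lam1)
    (p q : ℝ) (hp : p ∈ Set.Ioo (0 : ℝ) 1) (hq : q ∈ Set.Ioo (0 : ℝ) 1)
    (α : ℝ) (hαdef : α = 2 * p * q / (2 + p - q))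
    (heq : α * (lam1 - lam0) * Real.log (p * (1 - q) / ((1 - p) * q)) +
      lam0 * Real.log (p ^ 2 * (1 - q) / (1 - p)) - 2 * lam1 * Real.log (1 - p) = 0) :
    ((2 - q) * Hent p + p * Hent q) / (2 * p * lam1 + (2 - p - q) * lam0) =
      (α * Real.log (p * (1 - q) / ((1 - p) * q)) - 2 * Real.log (1 - p)) /
        (2 * lam0) := by
  obtain ⟨hp0, hp1⟩ := hp
  obtain ⟨hq0, hq1⟩ := hq
  have hp' : (0:ℝ) < 1 - p := by linarith
  have hq' : (0:ℝ) < 1 - q := by linarith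
  have hden : (0:ℝ) < 2 + p - q := by linarith
  have hα : α * (2 + p - q) = 2 * p * q := by
    rw [hαdef]; field_simp
  set a := Real.log p with ha
  set b := Real.log (1 - p) with hb
  set c := Real.log q with hc
  set d := Real.log (1 - q) with hd
  have hL : Real.log (p * (1 - q) / ((1 - p) * q)) = a + d - b - c := by
    rw [Real.log_div (by positivity) (by positivity), Real.log_mul hp0.ne' hq'.ne',
      Real.log_mul hp'.ne' hq0.ne']
    ring
  have hM : Real.log (p ^ 2 * (1 - q) / (1 - p)) = 2 * a + d - b := by
    rw [Real.log_div (by positivity) hp'.ne', Real.log_mul (by positivity) hq'.ne',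
      Real.log_pow]
    push_cast; ring
  rw [hL, hM] at heq
  rw [hL]
  have hD : (0:ℝ) < 2 * p * lam1 + (2 - p - q) * lam0 := by
    have : (0:ℝ) < 2 - p - q := by linarith
    positivity
  rw [div_eq_div_iff hD.ne' (by positivity)]
  simp only [Hent]
  linear_combination (-2 * p) * heq - lam0 * (a + d - b - c) * hα
end

section
/- Let λ_0, λ_1 > 0 with λ_0 ≠ λ_1, let (p,q) ∈ (0,1)², set α = 2pq/(2+p-q), and suppose α(λ_1-λ_0)·log(p(1-q)/((1-p)q)) + λ_0·log(p²(1-q)/(1-p)) - 2λ_1·log(1-p) = 0. Then ((2-q)H(p) + pH(q))/(2pλ_1 + (2-p-q)λ_0) = log(p²(1-q)/(1-p)³)/(2(λ_0 - λ_1)). -/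
open Filter Set MeasureTheory
open scoped ENNReal

/-- If furthermore `λ₀ ≠ λ₁`, then
`((2-q)H(p) + pH(q))/(2pλ₁ + (2-p-q)λ₀) = log(p²(1-q)/(1-p)³)/(2(λ₀-λ₁))`. -/
theorem stmt14 (lam0 lam1 : ℝ) (h0 : 0 < lam0) (h1 : 0 < lam1) (hne : lam0 ≠ lam1)
    (p q : ℝ) (hp : p ∈ Set.Ioo (0 : ℝ) 1) (hq : q ∈ Set.Ioo (0 : ℝ) 1)
    (α : ℝ) (hαdef : α = 2 * p * q / (2 + p - q))
    (heq : α * (lam1 - lam0) * Real.log (p * (1 - q) / ((1 - p) * q)) +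
      lam0 * Real.log (p ^ 2 * (1 - q) / (1 - p)) - 2 * lam1 * Real.log (1 - p) = 0) :
    ((2 - q) * Hent p + p * Hent q) / (2 * p * lam1 + (2 - p - q) * lam0) =
      Real.log (p ^ 2 * (1 - q) / (1 - p) ^ 3) / (2 * (lam0 - lam1)) := by
  obtain ⟨hp0, hp1⟩ := hp
  obtain ⟨hq0, hq1⟩ := hq
  have hpn : p ≠ 0 := ne_of_gt hp0
  have hpn1 : (1 : ℝ) - p ≠ 0 := by linarith
  have hqn : q ≠ 0 := ne_of_gt hq0
  have hqn1 : (1 : ℝ) - q ≠ 0 := by linarith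
  have hden : (2 : ℝ) + p - q ≠ 0 := by nlinarith
  set a := Real.log p with ha
  set b := Real.log (1 - p) with hb
  set c := Real.log q with hc
  set d := Real.log (1 - q) with hd
  have l1 : Real.log (p * (1 - q) / ((1 - p) * q)) = a + d - (b + c) := by
    rw [Real.log_div (by positivity) (by positivity),
      Real.log_mul hpn hqn1, Real.log_mul hpn1 hqn]
  have l2 : Real.log (p ^ 2 * (1 - q) / (1 - p)) = 2 * a + d - b := by
    rw [Real.log_div (by positivity) hpn1, Real.log_mul (by positivity) hqn1,
      Real.log_pow]
    push_cast; ring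
  have l3 : Real.log (p ^ 2 * (1 - q) / (1 - p) ^ 3) = 2 * a + d - 3 * b := by
    rw [Real.log_div (by positivity) (by positivity),
      Real.log_mul (by positivity) hqn1, Real.log_pow, Real.log_pow]
    push_cast; ring
  rw [l1, l2] at heq
  rw [hαdef] at heq
  have key : 2 * p * q * (lam1 - lam0) * (a + d - (b + c)) +
      (2 + p - q) * (lam0 * (2 * a + d - b) - 2 * lam1 * b) = 0 := by
    have h := heq
    field_simp at h
    linear_combination h
  rw [l3]
  simp only [Hent, ← ha, ← hb, ← hc, ← hd]
  have hD : (0:ℝ) < 2 * p * lam1 + (2 - p - q) * lam0 := by nlinarith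
  have h2 : 2 * (lam0 - lam1) ≠ 0 := mul_ne_zero two_ne_zero (sub_ne_zero.mpr hne)
  rw [div_eq_div_iff hD.ne' h2]
  linear_combination -key
end

section
/- Let α ∈ (0,1) and let (p,q) ∈ (0,1)² satisfy α = 2pq/(2+p-q). Then there exist λ_0, λ_1 > 0 such that α(λ_1-λ_0)·log(p(1-q)/((1-p)q)) + λ_0·log(p²(1-q)/(1-p)) - 2λ_1·log(1-p) = 0 if and only if α·log(p(1-q)/((1-p)q)) > max(2·log(1-p), log(p²(1-q)/(1-p))). -/
open Filter Set MeasureTheory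
open scoped ENNReal


/-- For `α ∈ (0,1)` and `(p,q) ∈ (0,1)²` with `α = 2pq/(2+p-q)`: there exist `λ₀, λ₁ > 0`
solving the equation of Lemma 3 at `(p,q)` iff
`α log(p(1-q)/((1-p)q)) > max(2 log(1-p), log(p²(1-q)/(1-p)))`. -/
theorem stmt17 (α : ℝ) (hα : α ∈ Set.Ioo (0 : ℝ) 1)
    (p q : ℝ) (hp : p ∈ Set.Ioo (0 : ℝ) 1) (hq : q ∈ Set.Ioo (0 : ℝ) 1)
    (hγ : α = 2 * p * q / (2 + p - q)) :
    (∃ lam0 lam1 : ℝ, 0 < lam0 ∧ 0 < lam1 ∧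
        α * (lam1 - lam0) * Real.log (p * (1 - q) / ((1 - p) * q)) +
          lam0 * Real.log (p ^ 2 * (1 - q) / (1 - p)) -
          2 * lam1 * Real.log (1 - p) = 0) ↔
      α * Real.log (p * (1 - q) / ((1 - p) * q)) >
        max (2 * Real.log (1 - p)) (Real.log (p ^ 2 * (1 - q) / (1 - p))) := by
  obtain ⟨hα0, hα1⟩ := hα
  obtain ⟨hp0, hp1⟩ := hp
  obtain ⟨hq0, hq1⟩ := hq
  have h1p : (0:ℝ) < 1 - p := by linarith
  have h1q : (0:ℝ) < 1 - q := by linarith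
  set L := Real.log (p * (1 - q) / ((1 - p) * q)) with hLdef
  set B := Real.log (p ^ 2 * (1 - q) / (1 - p)) with hBdef
  set C := Real.log (1 - p) with hCdef
  have hC : C < 0 := Real.log_neg h1p (by linarith)
  -- key: αL - 2C > 0 or αL - B > 0
  have key : 2 * C < α * L ∨ B < α * L := by
    rcases le_or_gt q p with hqp | hpq
    · left
      have hL0 : 0 ≤ L := by
        apply Real.log_nonneg
        rw [le_div_iff₀ (by positivity)]
        nlinarith
      nlinarith
    · right
      have hLexp : L = Real.log p + Real.log (1 - q) - (Real.log (1 - p) + Real.log q) := by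
        rw [hLdef, Real.log_div (by positivity) (by positivity),
          Real.log_mul (by positivity) (by positivity),
          Real.log_mul (by positivity) (by positivity)]
      have hBexp : B = 2 * Real.log p + Real.log (1 - q) - Real.log (1 - p) := by
        rw [hBdef, Real.log_div (by positivity) (by positivity),
          Real.log_mul (by positivity) (by positivity), Real.log_pow]
        push_cast; ring
      have hlogq : Real.log q < 0 := Real.log_neg hq0 hq1
      have hlogpq : Real.log p < Real.log q := Real.log_lt_log hp0 hpq
      have hlog1 : Real.log (1 - q) < Real.log (1 - p) :=
        Real.log_lt_log h1q (by linarith)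
      rw [hLexp, hBexp]
      nlinarith [mul_pos (sub_pos.mpr hα1) (sub_pos.mpr hlog1),
        mul_lt_mul_of_pos_left hlogpq (by linarith : (0:ℝ) < 2 - α),
        mul_lt_mul_of_pos_left hlogq hα0]
  constructor
  · rintro ⟨l0, l1, hl0, hl1, heq⟩
    have heq' : l1 * (α * L - 2 * C) = l0 * (α * L - B) := by linarith [heq]
    have both : 2 * C < α * L ∧ B < α * L := by
      rcases key with h | h
      · refine ⟨h, ?_⟩
        have : 0 < l0 * (α * L - B) := by rw [← heq']; nlinarith
        nlinarith
      · refine ⟨?_, h⟩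
        have : 0 < l1 * (α * L - 2 * C) := by rw [heq']; nlinarith
        nlinarith
    exact max_lt both.1 both.2
  · intro h
    rw [gt_iff_lt, max_lt_iff] at h
    refine ⟨α * L - 2 * C, α * L - B, by linarith [h.1], by linarith [h.2], by ring⟩
end
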